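/- arXiv:2001.05338 — 10 statements merged into one kernel-verified Lean document; each statement's English description precedes it below -/
import Mathlib

section
/- The family of finite H-forests has the amalgamation property: for all finite H-forests A, B, C and epimorphisms φ₁ : B → A and φ₂ : C → A, there exist a finite H-forest D and epimorphisms ψ₁ : D → B and ψ₂ : D → C such that φ₁ ∘ ψ₁ = φ₂ ∘ ψ₂; moreover D can be chosen so that its maximal chains are pairwise disjoint. -/
/-!
The amalgam is a disjoint union of chains, one for each choice of intervals `[b, b']` of `B` and
`[c, c']` of `C` with `φ₁ b = φ₂ c` and `φ₁ b' = φ₂ c'`. Each chain is a pair of lazy walks (every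
step stays put or goes up a cover) from `(b, c)` to `(b', c')` whose images in `A` agree, and `ψ₁`,
`ψ₂` read off the two components; disjoint unions of chains are H-forests whose maximal chains are
the components. Such walks exist because `A` is an H-forest: `φ₁ b` has at most one upper cover
below `φ₁ b'`, so whenever both walks have to move their image, they move it to the same point.
-/

/-- The Hasse relation of a partial order: `a R b` iff `a = b` or one covers the other. -/
def HasseRel {P : Type*} [PartialOrder P] (a b : P) : Prop :=
  a = b ∨ a ⋖ b ∨ b ⋖ a

/-- An epimorphism of finite partial orders (with their Hasse relations): a surjection such
that the order and the Hasse relation on the codomain are exactly the images of the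
corresponding relations on the domain. -/
def IsPosetEpi {Q P : Type*} [PartialOrder Q] [PartialOrder P] (φ : Q → P) : Prop :=
  Function.Surjective φ ∧
    (∀ a b : Q, a ≤ b → φ a ≤ φ b) ∧
    (∀ a b : Q, HasseRel a b → HasseRel (φ a) (φ b)) ∧
    (∀ a b : P, a ≤ b → ∃ a' b' : Q, a' ≤ b' ∧ φ a' = a ∧ φ b' = b) ∧
    (∀ a b : P, HasseRel a b → ∃ a' b' : Q, HasseRel a' b' ∧ φ a' = a ∧ φ b' = b)

/-- The Hasse diagram of a partial order, as a simple graph. -/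
def hasseGraph (P : Type*) [PartialOrder P] : SimpleGraph P :=
  SimpleGraph.fromRel (fun a b => HasseRel a b)

/-- An H-forest is a partial order whose Hasse diagram contains no cycles. -/
def IsHForest (P : Type*) [PartialOrder P] : Prop :=
  (hasseGraph P).IsAcyclic

/-- The maximal chains of the partial order are pairwise disjoint (membership in `F₀`). -/
def HasDisjointMaxChains (P : Type*) [PartialOrder P] : Prop :=
  ∀ C C' : Set P, IsMaxChain (· ≤ ·) C → IsMaxChain (· ≤ ·) C' → C ≠ C' → Disjoint C C'

open SimpleGraph

section Hasse

variable {P : Type*} [PartialOrder P] {a b : P}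

lemma HasseRel.symm (h : HasseRel a b) : HasseRel b a := by
  rcases h with h | h | h
  exacts [Or.inl h.symm, Or.inr (Or.inr h), Or.inr (Or.inl h)]

lemma WCovBy.hasseRel (h : a ⩿ b) : HasseRel a b := by
  rcases h.eq_or_covBy with h | h
  exacts [Or.inl h, Or.inr (Or.inl h)]

lemma hasseGraph_adj : (hasseGraph P).Adj a b ↔ a ⋖ b ∨ b ⋖ a := by
  simp only [hasseGraph, fromRel_adj, HasseRel]
  grind [CovBy.ne, CovBy.ne']

end Hasse

namespace IsPosetEpi

variable {Q P : Type*} [PartialOrder Q] [PartialOrder P] {φ : Q → P}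

lemma monotone (h : IsPosetEpi φ) : Monotone φ := h.2.1

lemma wcovBy_of_covBy (h : IsPosetEpi φ) {a b : Q} (hab : a ⋖ b) : φ a ⩿ φ b := by
  rcases h.2.2.1 a b (Or.inr (Or.inl hab)) with he | hc | hc
  · exact he ▸ WCovBy.refl _
  · exact hc.wcovBy
  · exact absurd (h.monotone hab.le) hc.lt.not_ge

lemma exists_le_lift (h : IsPosetEpi φ) {a b : P} (hab : a ≤ b) :
    ∃ a' b', a' ≤ b' ∧ φ a' = a ∧ φ b' = b :=
  h.2.2.2.1 a b hab

lemma of_covBy (hmono : Monotone φ) (hcov : ∀ a b, a ⋖ b → φ a ⩿ φ b)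
    (hle : ∀ a b, a ≤ b → ∃ a' b', a' ≤ b' ∧ φ a' = a ∧ φ b' = b)
    (hcov' : ∀ a b, a ⋖ b → ∃ a' b', a' ⋖ b' ∧ φ a' = a ∧ φ b' = b) :
    IsPosetEpi φ := by
  have hsurj : Function.Surjective φ := fun a =>
    let ⟨a', _, _, ha', _⟩ := hle a a le_rfl
    ⟨a', ha'⟩
  refine ⟨hsurj, hmono, ?_, hle, ?_⟩
  · rintro a b (rfl | h | h)
    exacts [Or.inl rfl, (hcov a b h).hasseRel, (hcov b a h).hasseRel.symm]
  · rintro a b (rfl | h | h)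
    · obtain ⟨a', rfl⟩ := hsurj a
      exact ⟨a', a', Or.inl rfl, rfl, rfl⟩
    · obtain ⟨a', b', h', rfl, rfl⟩ := hcov' a b h
      exact ⟨a', b', Or.inr (Or.inl h'), rfl, rfl⟩
    · obtain ⟨b', a', h', rfl, rfl⟩ := hcov' b a h
      exact ⟨a', b', Or.inr (Or.inr h'), rfl, rfl⟩

end IsPosetEpi

section HForest

variable {P : Type*} [PartialOrder P]

/-- A cycle of the Hasse diagram would have two distinct lower covers at its maximal vertex. -/
lemma isHForest_of_covBy_unique (h : ∀ a b c : P, a ⋖ c → b ⋖ c → a = b) : IsHForest P := by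
  classical
  intro v c hc
  obtain ⟨u, hu⟩ := c.support.toFinset.exists_maximal ⟨v, by simp⟩
  have hu' : u ∈ c.support := by simpa using hu.prop
  have hc' := hc.rotate hu'
  have below : ∀ x ∈ (c.rotate u hu').support, (hasseGraph P).Adj u x → x ⋖ u := by
    intro x hx hadj
    rcases hasseGraph_adj.1 hadj with hux | hxu
    · rw [Walk.mem_support_rotate_iff] at hx
      exact absurd (hu.2 (by simpa using hx) hux.le) hux.lt.not_ge
    · exact hxu
  exact hc'.snd_ne_penultimate <| h _ _ _
    (below _ (Walk.getVert_mem_support _ _) (Walk.adj_snd hc'.not_nil))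
    (below _ (Walk.getVert_mem_support _ _) (Walk.adj_penultimate hc'.not_nil).symm)

/-- Otherwise `a, b₁, …, c, …, b₂, a` is a cycle: everything strictly above `a` and below `c`
reaches `c` without using the edge `a b₁`. -/
lemma IsHForest.eq_of_covBy_of_covBy [Finite P] (hP : IsHForest P) {a b₁ b₂ c : P}
    (h₁ : a ⋖ b₁) (h₂ : a ⋖ b₂) (hc₁ : b₁ ≤ c) (hc₂ : b₂ ≤ c) : b₁ = b₂ := by
  by_contra hne
  set G := (hasseGraph P).deleteEdges {s(a, b₁)}
  have up : ∀ x, a < x → x ≤ c → G.Reachable x c := by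
    intro x
    induction x using WellFoundedGT.induction with
    | _ x ih =>
      intro hax hxc
      rcases hxc.lt_or_eq with hxc | rfl
      · obtain ⟨y, hxy, hyc⟩ := exists_covBy_le_of_lt hxc
        have hadj : G.Adj x y := by
          rw [deleteEdges_adj]
          refine ⟨hasseGraph_adj.2 (Or.inl hxy), ?_⟩
          simp only [Set.mem_singleton_iff, Sym2.eq_iff]
          rintro (⟨rfl, -⟩ | ⟨-, rfl⟩)
          exacts [hax.false, (hax.trans hxy.lt).false]
        exact hadj.reachable.trans (ih y hxy.lt (hax.trans hxy.lt) hyc)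
      · rfl
  have hadj : G.Adj b₂ a := by
    rw [deleteEdges_adj]
    refine ⟨hasseGraph_adj.2 (Or.inr h₂), ?_⟩
    simp only [Set.mem_singleton_iff, Sym2.eq_iff]
    rintro (⟨rfl, -⟩ | ⟨h, -⟩)
    exacts [h₂.lt.false, hne h.symm]
  have hreach : G.Reachable a b₁ :=
    (hadj.reachable.symm.trans ((up b₂ h₂.lt hc₂).trans (up b₁ h₁.lt hc₁).symm))
  exact isBridge_iff.1 (isAcyclic_iff_forall_adj_isBridge.1 hP (hasseGraph_adj.2 (Or.inl h₁)))
    hreach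

end HForest

namespace Sigma

variable {ι : Type*} {α : ι → Type*}

lemma fst_eq_of_le [∀ i, LE (α i)] {x y : Σ i, α i} (h : x ≤ y) : x.1 = y.1 :=
  (le_def.1 h).1

lemma mk_covBy_mk_iff [∀ i, Preorder (α i)] {i : ι} {a b : α i} :
    (⟨i, a⟩ : Σ i, α i) ⋖ ⟨i, b⟩ ↔ a ⋖ b := by
  refine ⟨fun h => ⟨mk_lt_mk_iff.1 h.lt, fun c hac hcb => h.2 (mk_lt_mk_iff.2 hac)
    (mk_lt_mk_iff.2 hcb)⟩, fun h => ⟨mk_lt_mk_iff.2 h.lt, ?_⟩⟩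
  rintro ⟨j, c⟩ hac hcb
  obtain rfl : i = j := fst_eq_of_le hac.le
  exact h.2 (mk_lt_mk_iff.1 hac) (mk_lt_mk_iff.1 hcb)

variable [∀ i, LinearOrder (α i)]

lemma le_total_of_fst_eq {x y : Σ i, α i} (h : x.1 = y.1) : x ≤ y ∨ y ≤ x := by
  obtain ⟨i, a⟩ := x
  obtain ⟨j, b⟩ := y
  obtain rfl : i = j := h
  simpa only [mk_le_mk_iff] using le_total a b

lemma isHForest : IsHForest (Σ i, α i) := by
  refine isHForest_of_covBy_unique fun a b c ha hb => ?_
  rcases le_total_of_fst_eq ((fst_eq_of_le ha.le).trans (fst_eq_of_le hb.le).symm) with h | h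
  · exact h.eq_of_not_lt fun hab => ha.2 hab hb.lt
  · exact (h.eq_of_not_lt fun hba => hb.2 hba ha.lt).symm

lemma eq_fiber_of_isMaxChain {S : Set (Σ i, α i)} (hS : IsMaxChain (· ≤ ·) S) {x : Σ i, α i}
    (hx : x ∈ S) : S = {y | y.1 = x.1} := by
  refine hS.2 (fun y hy z hz _ => le_total_of_fst_eq (hy.trans hz.symm)) fun y hy => ?_
  rcases eq_or_ne y x with rfl | hne
  · rfl
  · rcases hS.1 hy hx hne with h | h
    exacts [fst_eq_of_le h, (fst_eq_of_le h).symm]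

lemma hasDisjointMaxChains : HasDisjointMaxChains (Σ i, α i) := fun _ _ hS hS' hne =>
  Set.disjoint_left.2 fun _ hx hx' =>
    hne ((eq_fiber_of_isMaxChain hS hx).trans (eq_fiber_of_isMaxChain hS' hx').symm)

end Sigma

section LazyWalk

variable {X : Type*} [PartialOrder X] {f : ℕ → X}

lemma exists_eq_and_succ_eq_of_covBy (hf : ∀ k, f k ⩿ f (k + 1)) {n : ℕ} (h : f 0 ⋖ f n) :
    ∃ k < n, f k = f 0 ∧ f (k + 1) = f n := by
  induction n with
  | zero => exact absurd h.lt (lt_irrefl _)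
  | succ n ih =>
    by_cases hn : f n = f 0
    · exact ⟨n, n.lt_succ_self, hn, rfl⟩
    · have hstay : f n = f (n + 1) := by
        by_contra hne
        exact h.2 (lt_of_le_of_ne (monotone_nat_of_le_succ (fun k => (hf k).le) n.zero_le)
          (Ne.symm hn)) (lt_of_le_of_ne (hf n).le hne)
      obtain ⟨k, hk, h0, h1⟩ := ih (hstay ▸ h)
      exact ⟨k, by omega, h0, h1.trans hstay⟩

lemma isPosetEpi_sigma_of_wcovBy {ι : Type*} (len : ι → ℕ) (f : ι → ℕ → X)
    (hf : ∀ i k, f i k ⩿ f i (k + 1))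
    (hlift : ∀ x x', x ≤ x' → ∃ i, f i 0 = x ∧ f i (len i) = x') :
    IsPosetEpi (fun p : Σ i, Fin (len i + 1) => f p.1 p.2) := by
  refine IsPosetEpi.of_covBy ?_ ?_ ?_ ?_
  · rintro ⟨i, k⟩ ⟨j, l⟩ h
    obtain rfl : i = j := Sigma.fst_eq_of_le h
    exact monotone_nat_of_le_succ (fun k => (hf i k).le) (Sigma.mk_le_mk_iff.1 h)
  · rintro ⟨i, k⟩ ⟨j, l⟩ h
    obtain rfl : i = j := Sigma.fst_eq_of_le h.le
    rw [Sigma.mk_covBy_mk_iff, Fin.covBy_iff, Nat.covBy_iff_add_one_eq] at h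
    simpa only [← h] using hf i k
  · intro x x' hx
    obtain ⟨i, h0, hn⟩ := hlift x x' hx
    exact ⟨⟨i, 0⟩, ⟨i, Fin.last _⟩, Sigma.mk_le_mk_iff.2 (Fin.zero_le _), h0, hn⟩
  · intro x x' hx
    obtain ⟨i, h0, hn⟩ := hlift x x' hx.le
    obtain ⟨k, hk, hk0, hkn⟩ :=
      exists_eq_and_succ_eq_of_covBy (hf i) (n := len i) (by rwa [h0, hn])
    refine ⟨⟨i, ⟨k, by omega⟩⟩, ⟨i, ⟨k + 1, by omega⟩⟩, ?_, hk0.trans h0, hkn.trans hn⟩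
    rw [Sigma.mk_covBy_mk_iff, Fin.covBy_iff, Nat.covBy_iff_add_one_eq]

end LazyWalk

section SyncWalk

variable {A B C : Type*} [PartialOrder A] [PartialOrder B] [PartialOrder C]
  [Finite A] [Finite B] [Finite C] {φ₁ : B → A} {φ₂ : C → A}

lemma exists_syncStep (hA : IsHForest A) (hφ₁ : Monotone φ₁)
    (hφ₁' : ∀ b b', b ⋖ b' → φ₁ b ⩿ φ₁ b') (hφ₂ : Monotone φ₂)
    (hφ₂' : ∀ c c', c ⋖ c' → φ₂ c ⩿ φ₂ c') {b b' : B} {c c' : C} (hb : b ≤ b') (hc : c ≤ c')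
    (h : φ₁ b = φ₂ c) (h' : φ₁ b' = φ₂ c') (hne : (b, c) ≠ (b', c')) :
    ∃ b₁ c₁, b ⩿ b₁ ∧ b₁ ≤ b' ∧ c ⩿ c₁ ∧ c₁ ≤ c' ∧ φ₁ b₁ = φ₂ c₁ ∧ (b, c) < (b₁, c₁) := by
  rcases hb.lt_or_eq with hb | rfl
  · obtain ⟨b₁, hbb₁, hb₁⟩ := exists_covBy_le_of_lt hb
    rcases (hφ₁' b b₁ hbb₁).eq_or_covBy with he | ha₁
    · exact ⟨b₁, c, hbb₁.wcovBy, hb₁, .refl c, hc, he ▸ h,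
        Prod.mk_lt_mk.2 (.inl ⟨hbb₁.lt, le_rfl⟩)⟩
    have hc' : c < c' := hc.lt_of_ne fun hcc => by
      have := ha₁.lt.trans_le (hφ₁ hb₁)
      rw [h, h', hcc] at this
      exact this.false
    obtain ⟨c₁, hcc₁, hc₁⟩ := exists_covBy_le_of_lt hc'
    rcases (hφ₂' c c₁ hcc₁).eq_or_covBy with he | ha₂
    · exact ⟨b, c₁, .refl b, hb.le, hcc₁.wcovBy, hc₁, h.trans he,
        Prod.mk_lt_mk.2 (.inr ⟨le_rfl, hcc₁.lt⟩)⟩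
    · refine ⟨b₁, c₁, hbb₁.wcovBy, hb₁, hcc₁.wcovBy, hc₁, ?_,
        Prod.mk_lt_mk.2 (.inl ⟨hbb₁.lt, hcc₁.lt.le⟩)⟩
      exact hA.eq_of_covBy_of_covBy ha₁ (h ▸ ha₂) (hφ₁ hb₁) (h' ▸ hφ₂ hc₁)
  · have hc' : c < c' := hc.lt_of_ne fun hcc => hne (hcc ▸ rfl)
    obtain ⟨c₁, hcc₁, hc₁⟩ := exists_covBy_le_of_lt hc'
    refine ⟨b, c₁, .refl b, le_rfl, hcc₁.wcovBy, hc₁, ?_,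
      Prod.mk_lt_mk.2 (.inr ⟨le_rfl, hcc₁.lt⟩)⟩
    rcases (hφ₂' c c₁ hcc₁).eq_or_covBy with he | ha₂
    · exact h.trans he
    · have := ha₂.lt.trans_le (hφ₂ hc₁)
      rw [← h, ← h'] at this
      exact this.false.elim

lemma exists_syncWalk (hA : IsHForest A) (hφ₁ : Monotone φ₁)
    (hφ₁' : ∀ b b', b ⋖ b' → φ₁ b ⩿ φ₁ b') (hφ₂ : Monotone φ₂)
    (hφ₂' : ∀ c c', c ⋖ c' → φ₂ c ⩿ φ₂ c') {b b' : B} {c c' : C} (hb : b ≤ b') (hc : c ≤ c')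
    (h : φ₁ b = φ₂ c) (h' : φ₁ b' = φ₂ c') :
    ∃ (n : ℕ) (f : ℕ → B) (g : ℕ → C),
      (∀ k, f k ⩿ f (k + 1) ∧ g k ⩿ g (k + 1) ∧ φ₁ (f k) = φ₂ (g k)) ∧
        f 0 = b ∧ g 0 = c ∧ f n = b' ∧ g n = c' := by
  suffices ∀ p : B × C, p.1 ≤ b' → p.2 ≤ c' → φ₁ p.1 = φ₂ p.2 →
      ∃ (n : ℕ) (f : ℕ → B) (g : ℕ → C),
        (∀ k, f k ⩿ f (k + 1) ∧ g k ⩿ g (k + 1) ∧ φ₁ (f k) = φ₂ (g k)) ∧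
          f 0 = p.1 ∧ g 0 = p.2 ∧ f n = b' ∧ g n = c' from this (b, c) hb hc h
  intro p
  induction p using WellFoundedGT.induction with
  | _ p ih =>
    obtain ⟨b, c⟩ := p
    intro hb hc h
    by_cases hend : (b, c) = (b', c')
    · obtain ⟨rfl, rfl⟩ := Prod.mk.inj hend
      exact ⟨0, fun _ => b, fun _ => c, fun _ => ⟨.refl b, .refl c, h⟩, rfl, rfl, rfl, rfl⟩
    obtain ⟨b₁, c₁, hbb₁, hb₁, hcc₁, hc₁, h₁, hlt⟩ :=
      exists_syncStep hA hφ₁ hφ₁' hφ₂ hφ₂' hb hc h h' hend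
    obtain ⟨n, f, g, hfg, rfl, rfl, hfn, hgn⟩ := ih (b₁, c₁) hlt hb₁ hc₁ h₁
    refine ⟨n + 1, fun | 0 => b | k + 1 => f k, fun | 0 => c | k + 1 => g k, ?_,
      rfl, rfl, hfn, hgn⟩
    rintro (_ | k)
    · exact ⟨hbb₁, hcc₁, h⟩
    · exact hfg k

end SyncWalk

theorem stmt_1_general (A B C : Type*) [Fintype A] [Fintype B] [Fintype C]
    [PartialOrder A] [PartialOrder B] [PartialOrder C]
    (hA : IsHForest A)
    (φ₁ : B → A) (φ₂ : C → A) (h₁ : IsPosetEpi φ₁) (h₂ : IsPosetEpi φ₂) :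
    ∃ (D : Type) (_ : Fintype D) (_ : PartialOrder D),
      IsHForest D ∧ HasDisjointMaxChains D ∧
        ∃ (ψ₁ : D → B) (ψ₂ : D → C),
          IsPosetEpi ψ₁ ∧ IsPosetEpi ψ₂ ∧ φ₁ ∘ ψ₁ = φ₂ ∘ ψ₂ := by
  let I := {q : (B × C) × (B × C) // q.1 ≤ q.2 ∧ φ₁ q.1.1 = φ₂ q.1.2 ∧ φ₁ q.2.1 = φ₂ q.2.2}
  choose len f g hfg hf0 hg0 hfn hgn using fun q : I =>
    exists_syncWalk hA h₁.monotone (fun _ _ => h₁.wcovBy_of_covBy) h₂.monotone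
      (fun _ _ => h₂.wcovBy_of_covBy) q.2.1.1 q.2.1.2 q.2.2.1 q.2.2.2
  let e := (Finite.equivFin I).symm
  refine ⟨Σ i, Fin (len (e i) + 1), inferInstance, inferInstance, Sigma.isHForest,
    Sigma.hasDisjointMaxChains, fun p => f (e p.1) p.2, fun p => g (e p.1) p.2,
    isPosetEpi_sigma_of_wcovBy (len ∘ e) (f ∘ e) (fun _ k => (hfg _ k).1) ?_,
    isPosetEpi_sigma_of_wcovBy (len ∘ e) (g ∘ e) (fun _ k => (hfg _ k).2.1) ?_,
    funext fun p => (hfg _ _).2.2⟩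
  · intro b b' hb
    obtain ⟨c, c', hc, hcb, hcb'⟩ := h₂.exists_le_lift (h₁.monotone hb)
    refine ⟨e.symm ⟨((b, c), (b', c')), ⟨hb, hc⟩, hcb.symm, hcb'.symm⟩, ?_, ?_⟩
    · simp [hf0]
    · simp [hfn]
  · intro c c' hc
    obtain ⟨b, b', hb, hbc, hbc'⟩ := h₁.exists_le_lift (h₂.monotone hc)
    refine ⟨e.symm ⟨((b, c), (b', c')), ⟨hb, hc⟩, hbc, hbc'⟩, ?_, ?_⟩
    · simp [hg0]
    · simp [hgn]

/-- Amalgamation property for finite H-forests, with the amalgam having pairwise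
disjoint maximal chains. -/
theorem stmt_1 (A B C : Type*) [Fintype A] [Fintype B] [Fintype C]
    [PartialOrder A] [PartialOrder B] [PartialOrder C]
    (hA : IsHForest A) (hB : IsHForest B) (hC : IsHForest C)
    (φ₁ : B → A) (φ₂ : C → A) (h₁ : IsPosetEpi φ₁) (h₂ : IsPosetEpi φ₂) :
    ∃ (D : Type) (_ : Fintype D) (_ : PartialOrder D),
      IsHForest D ∧ HasDisjointMaxChains D ∧
        ∃ (ψ₁ : D → B) (ψ₂ : D → C),
          IsPosetEpi ψ₁ ∧ IsPosetEpi ψ₂ ∧ φ₁ ∘ ψ₁ = φ₂ ∘ ψ₂ :=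
  stmt_1_general A B C hA φ₁ φ₂ h₁ h₂
end

section
/- The family of all finite partial orders does not have the amalgamation property: there exist finite partial orders S, P, Q and epimorphisms φ : P → S and ψ : Q → S such that there are no finite partial order D and epimorphisms ψ₁ : D → P and ψ₂ : D → Q with φ ∘ ψ₁ = ψ ∘ ψ₂. -/
/-!
Let `S` be the diamond `0 < a, b < 1` (in `Fin 2 × Fin 2`, `a = (1, 0)` and `b = (0, 1)`), `P`
the disjoint union of two 3-chains lying over `0 < b < 1` and `0 < a < 1`, and `Q` the disjoint
union of a 3-chain over `0 < a < 1` and two 2-chains over `0 < b` and `b < 1`. In an amalgam `D`,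
lift the bottom and top of the `b`-chain of `P` to `d ≤ d'`. In `Q` the only comparable pair over
`(0, 1)` is the ends of the `a`-chain, so a covering chain from `d` to `d'` in `D` must step from
a point over `0` to a point over `a`. That point lies between the lifts of the `b`-chain of `P`,
hence over `0`, `b` or `1`.
-/

section Epi

variable {α β : Type*} [PartialOrder α] [PartialOrder β] {f : α → β}

theorem IsPosetEpi.monotone_s2 (hf : IsPosetEpi f) : Monotone f := fun a b ↦ hf.2.1 a b

theorem IsPosetEpi.hasseRel_of_covBy (hf : IsPosetEpi f) {a b : α} (hab : a ⋖ b) :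
    HasseRel (f a) (f b) :=
  hf.2.2.1 a b (.inr (.inl hab))

theorem IsPosetEpi.exists_le_lift_s2 (hf : IsPosetEpi f) {a b : β} (hab : a ≤ b) :
    ∃ a' b', a' ≤ b' ∧ f a' = a ∧ f b' = b :=
  hf.2.2.2.1 a b hab

theorem HasseRel.covBy {a b : α} (h : HasseRel a b) (hle : a ≤ b) (hne : a ≠ b) : a ⋖ b := by
  rcases h with h | h | h
  · exact absurd h hne
  · exact h
  · exact absurd (le_antisymm hle h.le) hne

variable [WellFoundedGT α] [IsStronglyAtomic α]

theorem exists_covBy_of_le_of_not {p : α → Prop} {x y : α} (hxy : x ≤ y) (hx : p x)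
    (hy : ¬ p y) : ∃ z w, x ≤ z ∧ z ⋖ w ∧ w ≤ y ∧ p z ∧ ¬ p w := by
  obtain ⟨z, ⟨hxz, hzy, hz⟩, hmax⟩ :=
    WellFoundedGT.exists_maximal ‹_› {z | x ≤ z ∧ z ≤ y ∧ p z} ⟨x, le_rfl, hxy, hx⟩
  obtain ⟨w, hzw, hwy⟩ := exists_covBy_le_of_lt (hzy.lt_of_ne (by rintro rfl; exact hy hz))
  exact ⟨z, w, hxz, hzw, hwy, hz, fun hw ↦ hzw.lt.not_ge (hmax ⟨hxz.trans hzw.le, hwy, hw⟩ hzw.le)⟩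

theorem exists_covBy_apply_of_le (hf : Monotone f)
    (hH : ∀ a b, a ⋖ b → HasseRel (f a) (f b)) {x y : α} (hxy : x ≤ y) (hfxy : f x ≠ f y) :
    ∃ w, x ≤ w ∧ w ≤ y ∧ f x ⋖ f w := by
  obtain ⟨z, w, hxz, hzw, hwy, hz, hw⟩ :=
    exists_covBy_of_le_of_not (p := fun z ↦ f z = f x) hxy rfl hfxy.symm
  refine ⟨w, hxz.trans hzw.le, hwy, ?_⟩
  rw [← hz]
  exact (hH z w hzw).covBy (hf hzw.le) (by rw [hz]; exact fun h ↦ hw h.symm)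

end Epi

instance Sum.instDecidableLE {α β : Type*} [LE α] [LE β] [DecidableLE α] [DecidableLE β] :
    DecidableLE (α ⊕ β)
  | .inl a, .inl b => decidable_of_iff (a ≤ b) Sum.inl_le_inl_iff.symm
  | .inl _, .inr _ => .isFalse Sum.not_inl_le_inr
  | .inr _, .inl _ => .isFalse Sum.not_inr_le_inl
  | .inr a, .inr b => decidable_of_iff (a ≤ b) Sum.inr_le_inr_iff.symm

instance instDecidableRelCovByOfFintype {α : Type*} [Preorder α] [Fintype α] [DecidableLT α] :
    DecidableRel (α := α) (· ⋖ ·) :=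
  fun a b ↦ inferInstanceAs (Decidable (a < b ∧ ∀ ⦃c⦄, a < c → ¬ c < b))

instance instDecidableRelHasseRel {α : Type*} [PartialOrder α] [Fintype α] [DecidableEq α]
    [DecidableLT α] : DecidableRel (HasseRel (P := α)) :=
  fun a b ↦ inferInstanceAs (Decidable (a = b ∨ a ⋖ b ∨ b ⋖ a))

attribute [local instance] decidableLTOfDecidableLE

namespace NoAmalgamation

abbrev S : Type := Fin 2 × Fin 2
abbrev P : Type := Fin 3 ⊕ Fin 3
abbrev Q : Type := Fin 3 ⊕ (Fin 2 ⊕ Fin 2)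

def φ : P → S
  | .inl i => ![(0, 0), (0, 1), (1, 1)] i
  | .inr i => ![(0, 0), (1, 0), (1, 1)] i

def ψ : Q → S
  | .inl i => ![(0, 0), (1, 0), (1, 1)] i
  | .inr (.inl j) => ![(0, 0), (0, 1)] j
  | .inr (.inr j) => ![(0, 1), (1, 1)] j

theorem isPosetEpi_φ : IsPosetEpi φ := ⟨by decide, by decide, by decide, by decide, by decide⟩

set_option synthInstance.maxSize 256 in
theorem isPosetEpi_ψ : IsPosetEpi ψ := ⟨by decide, by decide, by decide, by decide, by decide⟩

theorem eq_inl_of_le_of_ψ_eq : ∀ y y' : Q, y ≤ y' → ψ y = (0, 0) → ψ y' = (1, 1) →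
    y = .inl 0 ∧ y' = .inl 2 := by decide

theorem ψ_eq_of_covBy : ∀ y : Q, (.inl 0 : Q) ⋖ y → ψ y = (1, 0) := by decide

theorem φ_ne_of_le_of_le : ∀ x : P, (.inl 0 : P) ≤ x → x ≤ .inl 2 → φ x ≠ (1, 0) := by decide

theorem comp_ne_comp {D : Type*} [PartialOrder D] [WellFoundedGT D] [IsStronglyAtomic D]
    {ψ₁ : D → P} {ψ₂ : D → Q} (h₁ : IsPosetEpi ψ₁) (h₂ : IsPosetEpi ψ₂) : φ ∘ ψ₁ ≠ ψ ∘ ψ₂ := by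
  intro hcomm
  have hcomm' (x : D) : φ (ψ₁ x) = ψ (ψ₂ x) := congrFun hcomm x
  obtain ⟨d, d', hdd', hd, hd'⟩ := h₁.exists_le_lift_s2 (a := .inl 0) (b := .inl 2) (by decide)
  obtain ⟨hψ₂d, hψ₂d'⟩ := eq_inl_of_le_of_ψ_eq (ψ₂ d) (ψ₂ d') (h₂.monotone_s2 hdd')
    (by rw [← hcomm', hd]; rfl) (by rw [← hcomm', hd']; rfl)
  obtain ⟨w, hdw, hwd', hcov⟩ := exists_covBy_apply_of_le h₂.monotone_s2
    (fun _ _ ↦ h₂.hasseRel_of_covBy) hdd' (by rw [hψ₂d, hψ₂d']; decide)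
  rw [hψ₂d] at hcov
  refine φ_ne_of_le_of_le (ψ₁ w) (hd ▸ h₁.monotone_s2 hdw) (hd' ▸ h₁.monotone_s2 hwd') ?_
  rw [hcomm', ψ_eq_of_covBy _ hcov]

end NoAmalgamation

/-- The family of all finite partial orders does not have the amalgamation property. -/
theorem stmt_2 :
    ∃ (S P Q : Type) (_ : Fintype S) (_ : Fintype P) (_ : Fintype Q)
      (_ : PartialOrder S) (_ : PartialOrder P) (_ : PartialOrder Q)
      (φ : P → S) (ψ : Q → S),
      IsPosetEpi φ ∧ IsPosetEpi ψ ∧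
        ∀ (D : Type) (_ : Fintype D) (_ : PartialOrder D) (ψ₁ : D → P) (ψ₂ : D → Q),
          IsPosetEpi ψ₁ → IsPosetEpi ψ₂ → φ ∘ ψ₁ ≠ ψ ∘ ψ₂ :=
  ⟨NoAmalgamation.S, NoAmalgamation.P, NoAmalgamation.Q, inferInstance, inferInstance,
    inferInstance, inferInstance, inferInstance, inferInstance, NoAmalgamation.φ,
    NoAmalgamation.ψ, NoAmalgamation.isPosetEpi_φ, NoAmalgamation.isPosetEpi_ψ,
    fun _ _ _ _ _ ↦ NoAmalgamation.comp_ne_comp⟩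
end

section
/- For every finite partial order P there exist a finite partial order Q whose maximal chains are pairwise disjoint and an epimorphism φ : Q → P. -/
/-! ### Auxiliary construction -/

section Aux

variable {α : Type*} [PartialOrder α]

/-- The disjoint union of all maximal chains of `α`. -/
abbrev QSigma (α : Type*) [PartialOrder α] : Type _ :=
  Σ C : {C : Set α // IsMaxChain (· ≤ ·) C}, ↥C.1

/-- The projection map. -/
def qproj : QSigma α → α := fun q => (q.2 : α)

lemma exists_maxChain_pair {a b : α} (hab : a ≤ b) :
    ∃ C : Set α, IsMaxChain (· ≤ ·) C ∧ a ∈ C ∧ b ∈ C := by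
  have hchain : IsChain (· ≤ ·) ({a, b} : Set α) := by
    intro x hx y hy hxy
    rcases hx with rfl | rfl <;> rcases hy with rfl | rfl <;> simp_all
  obtain ⟨M, hM, hsub⟩ := hchain.exists_maxChain
  exact ⟨M, hM, hsub (by simp), hsub (by simp)⟩

lemma sigma_mk_covBy {ι : Type*} {β : ι → Type*} [∀ i, PartialOrder (β i)]
    {i : ι} {a b : β i} (h : a ⋖ b) : (⟨i, a⟩ : Σ i, β i) ⋖ ⟨i, b⟩ := by
  refine ⟨Sigma.mk_lt_mk_iff.2 h.lt, ?_⟩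
  rintro ⟨j, c⟩ h1 h2
  obtain ⟨h3, -⟩ := Sigma.lt_def.1 h1
  dsimp at h3; subst h3
  exact h.2 (Sigma.mk_lt_mk_iff.1 h1) (Sigma.mk_lt_mk_iff.1 h2)

/-- A cover in `α` between two elements of a common maximal chain lifts to a cover in `QSigma`. -/
lemma lift_covBy {C : Set α} (hC : IsMaxChain (· ≤ ·) C) {a b : α} (ha : a ∈ C) (hb : b ∈ C)
    (h : a ⋖ b) :
    (⟨⟨C, hC⟩, ⟨a, ha⟩⟩ : QSigma α) ⋖ ⟨⟨C, hC⟩, ⟨b, hb⟩⟩ := by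
  apply sigma_mk_covBy
  refine ⟨Subtype.mk_lt_mk.2 h.lt, ?_⟩
  rintro ⟨c, hc⟩ h1 h2
  exact h.2 (Subtype.mk_lt_mk.1 h1) (Subtype.mk_lt_mk.1 h2)

/-- The projection maps covers to covers. -/
lemma qproj_covBy {q q' : QSigma α} (h : q ⋖ q') : qproj q ⋖ qproj q' := by
  obtain ⟨⟨C, hC⟩, a⟩ := q
  obtain ⟨D, b⟩ := q'
  obtain ⟨h3, hlt⟩ := Sigma.lt_def.1 h.lt
  dsimp at h3
  subst h3
  -- no element of C strictly between a and b
  have hmid : ∀ x ∈ C, ¬((a : α) < x ∧ x < (b : α)) := by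
    rintro x hx ⟨hax, hxb⟩
    have h1 : (⟨⟨C, hC⟩, a⟩ : QSigma α) < ⟨⟨C, hC⟩, ⟨x, hx⟩⟩ :=
      Sigma.mk_lt_mk_iff.2 (Subtype.coe_lt_coe.1 hax)
    have h2 : (⟨⟨C, hC⟩, ⟨x, hx⟩⟩ : QSigma α) < ⟨⟨C, hC⟩, b⟩ :=
      Sigma.mk_lt_mk_iff.2 (Subtype.coe_lt_coe.1 hxb)
    exact h.2 h1 h2
  have hab : (a : α) < b := Subtype.mk_lt_mk.1 hlt
  refine ⟨hab, ?_⟩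
  intro c hac hcb
  -- C ∪ {c} is a chain
  have hchain : IsChain (· ≤ ·) (insert c C) := by
    intro x hx y hy hxy
    rcases hx with rfl | hx
    · rcases hy with rfl | hy
      · exact absurd rfl hxy
      · -- y ∈ C : compare with a and b
        rcases hC.1.total a.2 hy with h1 | h1
        · rcases hC.1.total b.2 hy with h2 | h2
          · exact Or.inl (le_of_lt (lt_of_lt_of_le hcb h2))
          · rcases eq_or_lt_of_le h1 with rfl | h1
            · exact Or.inr (le_of_lt hac)
            · rcases eq_or_lt_of_le h2 with rfl | h2
              · exact Or.inl (le_of_lt hcb)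
              · exact absurd ⟨h1, h2⟩ (hmid y hy)
        · exact Or.inr (h1.trans (le_of_lt hac))
    · rcases hy with rfl | hy
      · rcases hC.1.total a.2 hx with h1 | h1
        · rcases hC.1.total b.2 hx with h2 | h2
          · exact Or.inr (le_of_lt (lt_of_lt_of_le hcb h2))
          · rcases eq_or_lt_of_le h1 with rfl | h1
            · exact Or.inl (le_of_lt hac)
            · rcases eq_or_lt_of_le h2 with rfl | h2
              · exact Or.inr (le_of_lt hcb)
              · exact absurd ⟨h1, h2⟩ (hmid x hx)
        · exact Or.inl (h1.trans (le_of_lt hac))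
      · exact hC.1 hx hy hxy
  have : C = insert c C := hC.2 hchain (Set.subset_insert _ _)
  have hcC : c ∈ C := this ▸ Set.mem_insert _ _
  exact hmid c hcC ⟨hac, hcb⟩

/-- The fiber over a maximal chain, as a subset of `QSigma α`. -/
def fiber (C : {C : Set α // IsMaxChain (· ≤ ·) C}) : Set (QSigma α) :=
  {q | q.1 = C}

lemma fiber_isChain (C : {C : Set α // IsMaxChain (· ≤ ·) C}) :
    IsChain (· ≤ ·) (fiber C) := by
  rintro ⟨D, x⟩ hx ⟨D', y⟩ hy hne
  obtain rfl : D' = D := by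
    rw [show D' = C from hy, show D = C from hx]
  have hxy : (x : α) ≠ (y : α) := by
    intro h
    exact hne (by simp [Subtype.ext h])
  rcases D'.2.1 x.2 y.2 hxy with h | h
  · exact Or.inl (Sigma.mk_le_mk_iff.2 h)
  · exact Or.inr (Sigma.mk_le_mk_iff.2 h)

lemma maxChain_eq_fiber {M : Set (QSigma α)} (hM : IsMaxChain (· ≤ ·) M)
    {q : QSigma α} (hq : q ∈ M) : M = fiber q.1 := by
  apply hM.2 (fiber_isChain q.1)
  intro m hm
  rcases eq_or_ne m q with rfl | hne
  · rfl
  · rcases hM.1 hm hq hne with h | h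
    · exact (Sigma.le_def.1 h).1
    · exact ((Sigma.le_def.1 h).1).symm

lemma qsigma_disjoint : HasDisjointMaxChains (QSigma α) := by
  intro C C' hC hC' hne
  rw [Set.disjoint_left]
  intro q hq hq'
  exact hne ((maxChain_eq_fiber hC hq).trans (maxChain_eq_fiber hC' hq').symm)

lemma qproj_epi : IsPosetEpi (qproj (α := α)) := by
  refine ⟨?_, ?_, ?_, ?_, ?_⟩
  · intro a
    obtain ⟨C, hC, ha, -⟩ := exists_maxChain_pair (le_refl a)
    exact ⟨⟨⟨C, hC⟩, ⟨a, ha⟩⟩, rfl⟩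
  · rintro _ _ ⟨i, a, b, h⟩
    exact h
  · intro a b h
    rcases h with rfl | h | h
    · exact Or.inl rfl
    · exact Or.inr (Or.inl (qproj_covBy h))
    · exact Or.inr (Or.inr (qproj_covBy h))
  · intro a b hab
    obtain ⟨C, hC, ha, hb⟩ := exists_maxChain_pair hab
    exact ⟨⟨⟨C, hC⟩, ⟨a, ha⟩⟩, ⟨⟨C, hC⟩, ⟨b, hb⟩⟩,
      Sigma.mk_le_mk_iff.2 (Subtype.mk_le_mk.2 hab), rfl, rfl⟩
  · intro a b h
    rcases h with rfl | h | h
    · obtain ⟨C, hC, ha, -⟩ := exists_maxChain_pair (le_refl a)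
      exact ⟨⟨⟨C, hC⟩, ⟨a, ha⟩⟩, ⟨⟨C, hC⟩, ⟨a, ha⟩⟩, Or.inl rfl, rfl, rfl⟩
    · obtain ⟨C, hC, ha, hb⟩ := exists_maxChain_pair h.le
      exact ⟨⟨⟨C, hC⟩, ⟨a, ha⟩⟩, ⟨⟨C, hC⟩, ⟨b, hb⟩⟩,
        Or.inr (Or.inl (lift_covBy hC ha hb h)), rfl, rfl⟩
    · obtain ⟨C, hC, hb, ha⟩ := exists_maxChain_pair h.le
      exact ⟨⟨⟨C, hC⟩, ⟨a, ha⟩⟩, ⟨⟨C, hC⟩, ⟨b, hb⟩⟩,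
        Or.inr (Or.inr (lift_covBy hC hb ha h)), rfl, rfl⟩

/-- Composing a poset epi with an order isomorphism gives a poset epi. -/
lemma IsPosetEpi.comp_orderIso {Q β : Type*} [PartialOrder Q] [PartialOrder β]
    {ψ : Q → α} (hψ : IsPosetEpi ψ) (f : α ≃o β) : IsPosetEpi (fun q => f (ψ q)) := by
  obtain ⟨hsurj, hmono, hhasse, hle, hH⟩ := hψ
  have hfH : ∀ a b : α, HasseRel a b → HasseRel (f a) (f b) := by
    intro a b h
    rcases h with rfl | h | h
    · exact Or.inl rfl
    · exact Or.inr (Or.inl ((apply_covBy_apply_iff f).2 h))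
    · exact Or.inr (Or.inr ((apply_covBy_apply_iff f).2 h))
  refine ⟨fun b => ?_, ?_, ?_, ?_, ?_⟩
  · obtain ⟨q, hq⟩ := hsurj (f.symm b)
    exact ⟨q, by simp [hq]⟩
  · intro a b h
    exact f.le_iff_le.2 (hmono a b h)
  · intro a b h
    exact hfH _ _ (hhasse a b h)
  · intro a b h
    obtain ⟨a', b', h1, h2, h3⟩ := hle (f.symm a) (f.symm b) (f.symm.le_iff_le.2 h)
    exact ⟨a', b', h1, by simp [h2], by simp [h3]⟩
  · intro a b h
    have h' : HasseRel (f.symm a) (f.symm b) := by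
      rcases h with rfl | h | h
      · exact Or.inl rfl
      · exact Or.inr (Or.inl ((apply_covBy_apply_iff f.symm).2 h))
      · exact Or.inr (Or.inr ((apply_covBy_apply_iff f.symm).2 h))
    obtain ⟨a', b', h1, h2, h3⟩ := hH _ _ h'
    exact ⟨a', b', h1, by simp [h2], by simp [h3]⟩

end Aux

/-! ### A `Type 0` model of a finite partial order -/

/-- A `Type 0` copy of the finite type `P`, with no pre-existing instances. -/
def Model (P : Type*) [Fintype P] : Type := Fin (Fintype.card P)

noncomputable def modelEquiv (P : Type*) [Fintype P] : Model P ≃ P :=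
  (Fintype.equivFin P).symm

noncomputable instance (P : Type*) [Fintype P] [PartialOrder P] : PartialOrder (Model P) :=
  PartialOrder.lift (modelEquiv P) (modelEquiv P).injective

instance (P : Type*) [Fintype P] : Finite (Model P) :=
  Finite.of_equiv P (modelEquiv P).symm

noncomputable def modelIso (P : Type*) [Fintype P] [PartialOrder P] : Model P ≃o P :=
  { modelEquiv P with map_rel_iff' := Iff.rfl }

/-- Every finite partial order is the epimorphic image of a finite partial order whose
maximal chains are pairwise disjoint. -/
theorem stmt_3 (P : Type*) [Fintype P] [PartialOrder P] :
    ∃ (Q : Type) (_ : Fintype Q) (_ : PartialOrder Q),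
      HasDisjointMaxChains Q ∧ ∃ φ : Q → P, IsPosetEpi φ := by
  classical
  refine ⟨QSigma (Model P), Fintype.ofFinite _, inferInstance, qsigma_disjoint, ?_⟩
  exact ⟨fun q => modelIso P (qproj q), qproj_epi.comp_orderIso (modelIso P)⟩
end

section
/- Let P, P' be finite H-forests and φ : P → P' an epimorphism. Then: (i) for every maximal chain B of P there is a maximal chain B' of P' with φ[B] ⊆ B'; (ii) for every maximal chain B' of P' there is a maximal chain B of P with φ[B] = B'. -/
/-!
For (i), the monotone image of a chain is a chain, and it extends to a maximal one.

For (ii), in a finite H-forest any two ascending Hasse paths between the same points coincide, so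
every interval `[a, b]` is a chain; hence a maximal chain `B'` is the interval `[b₀, b₁]` between
its minimal and its maximal point. Lift `b₀ ≤ b₁` to `u ≤ v` and extend `{u, v}` to a maximal
chain `A`. Minimality of `b₀` and maximality of `b₁` keep `φ '' A` inside `[b₀, b₁]`, and since
`φ` sends a cover either to a cover or to a single point, `φ '' A` skips no point of `[b₀, b₁]`.
-/

open Set SimpleGraph

namespace SimpleGraph.Walk

variable {α : Type*} [PartialOrder α] {G : SimpleGraph α}

def IsAscending {a b : α} (w : G.Walk a b) : Prop :=
  ∀ d ∈ w.darts, d.fst < d.snd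

lemma isAscending_cons {a b c : α} (h : G.Adj a b) (w : G.Walk b c) :
    (cons h w).IsAscending ↔ a < b ∧ w.IsAscending := by
  simp [IsAscending, darts_cons]

lemma IsAscending.append {a b c : α} {p : G.Walk a b} {q : G.Walk b c}
    (hp : p.IsAscending) (hq : q.IsAscending) : (p.append q).IsAscending := by
  simp only [IsAscending, darts_append, List.mem_append]
  rintro d (hd | hd)
  exacts [hp d hd, hq d hd]

lemma IsAscending.mem_Icc {a b : α} {w : G.Walk a b} (hw : w.IsAscending) {z : α}
    (hz : z ∈ w.support) : z ∈ Icc a b := by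
  induction w generalizing z with
  | nil => simp_all
  | cons h p ih =>
    rw [isAscending_cons] at hw
    rw [support_cons, List.mem_cons] at hz
    rcases hz with rfl | hz
    · exact ⟨le_rfl, (hw.1.trans_le (ih hw.2 p.start_mem_support).2).le⟩
    · exact ⟨hw.1.le.trans (ih hw.2 hz).1, (ih hw.2 hz).2⟩

lemma IsAscending.isPath {a b : α} {w : G.Walk a b} (hw : w.IsAscending) : w.IsPath := by
  induction w with
  | nil => exact .nil
  | cons h p ih =>
    rw [isAscending_cons] at hw
    exact (cons_isPath_iff h p).2
      ⟨ih hw.2, fun ha => (hw.1.trans_le (hw.2.mem_Icc ha).1).false⟩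

lemma IsAscending.isChain_support {a b : α} {w : G.Walk a b} (hw : w.IsAscending) :
    IsChain (· ≤ ·) {z | z ∈ w.support} := by
  induction w with
  | nil => simp [IsChain.singleton]
  | cons h p ih =>
    rw [isAscending_cons] at hw
    simp only [support_cons, List.mem_cons, ofPred_or, ofPred_eq_eq_singleton,
      singleton_union]
    exact (ih hw.2).insert fun z hz _ => .inl (hw.1.le.trans (hw.2.mem_Icc hz).1)

end SimpleGraph.Walk

section HasseForest

variable {α : Type*} [PartialOrder α] [Finite α]

lemma exists_isAscending_hasse_walk {a b : α} (hab : a ≤ b) :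
    ∃ w : (hasse α).Walk a b, w.IsAscending := by
  induction a using WellFoundedGT.induction with
  | _ a ih =>
    rcases hab.eq_or_lt with rfl | hlt
    · exact ⟨.nil, by simp [Walk.IsAscending]⟩
    obtain ⟨c, hac, hcb⟩ := exists_covBy_le_of_lt hlt
    obtain ⟨w, hw⟩ := ih c hac.lt hcb
    exact ⟨.cons (hasse_adj.2 (.inl hac)) w, (Walk.isAscending_cons _ _).2 ⟨hac.lt, hw⟩⟩

lemma exists_isAscending_hasse_walk_mem_support {a b c : α} (hac : a ≤ c) (hcb : c ≤ b) :
    ∃ w : (hasse α).Walk a b, w.IsAscending ∧ c ∈ w.support := by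
  obtain ⟨p, hp⟩ := exists_isAscending_hasse_walk hac
  obtain ⟨q, hq⟩ := exists_isAscending_hasse_walk hcb
  exact ⟨p.append q, hp.append hq, (Walk.mem_support_append_iff p q).2 (.inl p.end_mem_support)⟩

/-- Every point of `Icc a b` lies on an ascending path from `a` to `b`, and in a forest there is
only one such path. -/
theorem isChain_Icc_of_isAcyclic (hα : (hasse α).IsAcyclic) (a b : α) :
    IsChain (· ≤ ·) (Icc a b) := by
  intro x hx y hy _
  obtain ⟨p, hp, hxp⟩ := exists_isAscending_hasse_walk_mem_support hx.1 hx.2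
  obtain ⟨q, hq, hyq⟩ := exists_isAscending_hasse_walk_mem_support hy.1 hy.2
  have hpq : p = q :=
    congrArg Subtype.val ((hα.subsingleton_path a b).elim ⟨p, hp.isPath⟩ ⟨q, hq.isPath⟩)
  subst hpq
  exact hp.isChain_support.total hxp hyq

lemma IsMaxChain.exists_isMin {B : Set α} (hB : IsMaxChain (· ≤ ·) B) (hne : B.Nonempty) :
    ∃ b ∈ B, IsMin b := by
  obtain ⟨b, hb⟩ := B.toFinite.exists_minimal hne
  exact ⟨b, hb.1, (Flag.isMin_coe (s := .ofIsMaxChain B hB) (a := ⟨b, hb.1⟩)).2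
    fun c hc => hb.2 c.2 hc⟩

lemma IsMaxChain.exists_isMax {B : Set α} (hB : IsMaxChain (· ≤ ·) B) (hne : B.Nonempty) :
    ∃ b ∈ B, IsMax b :=
  IsMaxChain.exists_isMin (α := αᵒᵈ) hB.symm hne

lemma IsMaxChain.exists_covBy_le {B : Set α} (hB : IsMaxChain (· ≤ ·) B) {a b : α}
    (ha : a ∈ B) (hb : b ∈ B) (hab : a < b) : ∃ c ∈ B, a ⋖ c ∧ c ≤ b := by
  let s := Flag.ofIsMaxChain B hB
  obtain ⟨c, hac, hcb⟩ := exists_covBy_le_of_lt (α := s) (a := ⟨a, ha⟩) (b := ⟨b, hb⟩) hab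
  exact ⟨c, c.2, Flag.coe_covBy_coe.2 hac, hcb⟩

lemma IsMaxChain.eq_Icc_of_isAcyclic (hα : (hasse α).IsAcyclic) {B : Set α}
    (hB : IsMaxChain (· ≤ ·) B) {a b : α} (ha : a ∈ B) (hmin : IsMin a) (hb : b ∈ B)
    (hmax : IsMax b) : B = Icc a b := by
  refine hB.2 (isChain_Icc_of_isAcyclic hα a b) fun c hc => ⟨?_, ?_⟩
  · exact (hB.1.total ha hc).elim id fun h => hmin h
  · exact (hB.1.total hc hb).elim id fun h => hmax h

end HasseForest

lemma hasseGraph_eq_hasse (α : Type*) [PartialOrder α] : hasseGraph α = hasse α := by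
  ext a b
  simp only [hasseGraph, HasseRel, fromRel_adj, hasse_adj]
  exact ⟨fun ⟨_, h⟩ => by tauto, fun h => ⟨h.elim CovBy.ne CovBy.ne', by tauto⟩⟩

section Epimorphism

variable {P Q : Type*} [PartialOrder P] [PartialOrder Q] {φ : P → Q}

lemma IsPosetEpi.monotone_s4 (hφ : IsPosetEpi φ) : Monotone φ :=
  hφ.2.1

lemma IsPosetEpi.exists_le_lift_s4 (hφ : IsPosetEpi φ) {a b : Q} (h : a ≤ b) :
    ∃ a' b' : P, a' ≤ b' ∧ φ a' = a ∧ φ b' = b :=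
  hφ.2.2.2.1 a b h

lemma IsPosetEpi.wcovBy_of_covBy_s4 (hφ : IsPosetEpi φ) {a b : P} (h : a ⋖ b) : φ a ⩿ φ b := by
  rcases hφ.2.2.1 a b (.inr (.inl h)) with h' | h' | h'
  · exact h' ▸ WCovBy.refl _
  · exact h'.wcovBy
  · exact absurd (hφ.monotone_s4 h.le) h'.lt.not_ge

/-- Pick `a ∈ A` maximal with `φ a ≤ c`; if `φ a < c`, the successor `a'` of `a` in `A` would
give `φ a < c < φ a'`, although `φ a ⩿ φ a'`. -/
lemma Icc_subset_image_of_isMaxChain [Finite P] (hmono : Monotone φ)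
    (hcov : ∀ ⦃a b : P⦄, a ⋖ b → φ a ⩿ φ b) {A : Set P} (hA : IsMaxChain (· ≤ ·) A)
    {u v : P} (hu : u ∈ A) (hv : v ∈ A) (hC : IsChain (· ≤ ·) (Icc (φ u) (φ v))) :
    Icc (φ u) (φ v) ⊆ φ '' A := by
  intro c hc
  obtain ⟨a, ⟨haA, hac⟩, hmax⟩ := {a ∈ A | φ a ≤ c}.toFinite.exists_maximal ⟨u, hu, hc.1⟩
  refine ⟨a, haA, hac.lt_or_eq.resolve_left fun hlt => ?_⟩
  have hva : ¬v ≤ a := fun h => (hlt.trans_le hc.2).not_ge (hmono h)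
  obtain ⟨a', ha'A, haa', ha'v⟩ :=
    hA.exists_covBy_le haA hv (lt_of_le_not_ge ((hA.1.total haA hv).resolve_right hva) hva)
  have hnot : ¬φ a' ≤ c := fun h => haa'.lt.not_ge (hmax ⟨ha'A, h⟩ haa'.le)
  have hua' : φ u ≤ φ a' :=
    (hA.1.total hu ha'A).elim (fun h => hmono h) fun h => absurd ((hmono h).trans hc.1) hnot
  have hca' : c < φ a' :=
    lt_of_le_not_ge ((hC.total hc ⟨hua', hmono ha'v⟩).resolve_right hnot) hnot
  exact (hcov haa').2 hlt hca'

lemma IsPosetEpi.exists_isMaxChain_image_eq [Finite P] [Finite Q] (hQ : (hasse Q).IsAcyclic)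
    (hφ : IsPosetEpi φ) {B' : Set Q} (hB' : IsMaxChain (· ≤ ·) B') :
    ∃ B : Set P, IsMaxChain (· ≤ ·) B ∧ φ '' B = B' := by
  rcases B'.eq_empty_or_nonempty with rfl | hne
  · have := hB'.isEmpty_iff.2 rfl
    have := φ.isEmpty
    obtain ⟨B, hB, -⟩ := (IsChain.empty (r := (· ≤ ·)) (α := P)).exists_maxChain
    exact ⟨B, hB, by simp [eq_empty_of_isEmpty]⟩
  obtain ⟨b₀, hb₀, hmin⟩ := hB'.exists_isMin hne
  obtain ⟨b₁, hb₁, hmax⟩ := hB'.exists_isMax hne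
  have hB'_eq := hB'.eq_Icc_of_isAcyclic hQ hb₀ hmin hb₁ hmax
  obtain ⟨u, v, huv, rfl, rfl⟩ := hφ.exists_le_lift_s4 (hB'_eq ▸ hb₁).1
  obtain ⟨A, hA, huvA⟩ := (IsChain.pair huv).exists_maxChain
  have hu : u ∈ A := huvA (mem_insert u _)
  have hv : v ∈ A := huvA (mem_insert_of_mem u rfl)
  rw [hB'_eq]
  refine ⟨A, hA, Subset.antisymm ?_ (Icc_subset_image_of_isMaxChain hφ.monotone_s4
    (fun _ _ => hφ.wcovBy_of_covBy_s4) hA hu hv (isChain_Icc_of_isAcyclic hQ _ _))⟩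
  rintro _ ⟨a, ha, rfl⟩
  exact ⟨(hA.1.total hu ha).elim (fun h => hφ.monotone_s4 h) fun h => hmin (hφ.monotone_s4 h),
    (hA.1.total ha hv).elim (fun h => hφ.monotone_s4 h) fun h => hmax (hφ.monotone_s4 h)⟩

end Epimorphism

theorem stmt_4_general (P P' : Type*) [Fintype P] [Fintype P'] [PartialOrder P] [PartialOrder P']
    (hP' : IsHForest P') (φ : P → P') (hφ : IsPosetEpi φ) :
    (∀ B : Set P, IsMaxChain (· ≤ ·) B →
      ∃ B' : Set P', IsMaxChain (· ≤ ·) B' ∧ φ '' B ⊆ B') ∧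
    (∀ B' : Set P', IsMaxChain (· ≤ ·) B' →
      ∃ B : Set P, IsMaxChain (· ≤ ·) B ∧ φ '' B = B') :=
  ⟨fun _ hB => (hB.1.image_of_map_rel _ _ φ fun _ _ h => hφ.monotone_s4 h).exists_maxChain,
    fun _ hB' => hφ.exists_isMaxChain_image_eq (hasseGraph_eq_hasse P' ▸ hP') hB'⟩

/-- Behaviour of maximal chains under epimorphisms of finite H-forests. -/
theorem stmt_4 (P P' : Type*) [Fintype P] [Fintype P'] [PartialOrder P] [PartialOrder P']
    (hP : IsHForest P) (hP' : IsHForest P') (φ : P → P') (hφ : IsPosetEpi φ) :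
    (∀ B : Set P, IsMaxChain (· ≤ ·) B →
      ∃ B' : Set P', IsMaxChain (· ≤ ·) B' ∧ φ '' B ⊆ B') ∧
    (∀ B' : Set P', IsMaxChain (· ≤ ·) B' →
      ∃ B : Set P, IsMaxChain (· ≤ ·) B ∧ φ '' B = B') :=
  stmt_4_general P P' hP' φ hφ
end

section
/- Let (A_n, R_n, φ_n^{n+1}) be as in the context, with projective limit 𝔸 and relation R^𝔸. Then R^𝔸 is transitive if and only if for every n and all a, b ∈ A_n such that ¬R_n(a, b) and there exists c with R_n(a, c) and R_n(c, b), there is m > n such that for all a' ∈ (φ_n^m)⁻¹(a) and b' ∈ (φ_n^m)⁻¹(b), one has ¬R_m(a', b') and there is no c' with R_m(a', c') and R_m(c', b'). -/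
/-!
If `a, b ∈ A_n` are at `R_n`-distance exactly two but every level `m > n` has preimages of
`a` and `b` at distance at most two, then the 2-chains `x R_m y R_m z` with `x` over `a` and
`z` over `b` form an inverse system of finite nonempty sets. By Kőnig's lemma it has a thread,
i.e. points `u R v R w` of the limit with `u(n) = a`, `w(n) = b`, so `R^𝔸` is not transitive.
Conversely, if `u R v R w` but `¬ R_n (u n, w n)`, then `v` provides a common neighbour of
`u(m)` and `w(m)` at every level `m`, so `u(n), w(n)` are never separated.
-/

/-- The projective (inverse) limit of a sequence of sets with bonding maps. -/
def InvLim (A : ℕ → Type*) (φ : ∀ n, A (n+1) → A n) : Type _ :=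
  {u : ∀ n, A n // ∀ n, φ n (u (n+1)) = u n}

/-- The topology of the projective limit: the subspace topology inside the product of the
discrete spaces `A n`. -/
instance (A : ℕ → Type*) (φ : ∀ n, A (n+1) → A n) : TopologicalSpace (InvLim A φ) :=
  letI : ∀ n, TopologicalSpace (A n) := fun _ => ⊥
  inferInstanceAs (TopologicalSpace {u : ∀ n, A n // ∀ n, φ n (u (n+1)) = u n})

/-- The composite bonding map `φ_n^{n+k} : A (n+k) → A n`. -/
def bond {A : ℕ → Type*} (φ : ∀ n, A (n+1) → A n) (n : ℕ) : ∀ k, A (n + k) → A n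
  | 0, a => a
  | k+1, a => bond φ n k (φ (n+k) a)

/-- The relation `R^𝔸` on the projective limit. -/
def limRel (A : ℕ → Type*) (R : ∀ n, A n → A n → Prop) (φ : ∀ n, A (n+1) → A n)
    (u v : InvLim A φ) : Prop := ∀ n, R n (u.val n) (v.val n)

open Set

section InverseSystem

variable {B : ℕ → Type*} {ψ : ∀ k, B (k+1) → B k}

theorem mapsTo_bond {S : ∀ k, Set (B k)} (hS : ∀ k, MapsTo (ψ k) (S (k+1)) (S k)) (n : ℕ) :
    ∀ k, MapsTo (bond ψ n k) (S (n+k)) (S n)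
  | 0 => mapsTo_id _
  | k+1 => (mapsTo_bond hS n k).comp (hS (n+k))

theorem InvLim.bond_val (u : InvLim B ψ) (n : ℕ) : ∀ k, bond ψ n k (u.val (n+k)) = u.val n
  | 0 => rfl
  | k+1 => (congrArg (bond ψ n k) (u.2 (n+k))).trans (u.bond_val n k)

open CategoryTheory in
theorem InvLim.nonempty [∀ k, Finite (B k)] [∀ k, Nonempty (B k)] : Nonempty (InvLim B ψ) := by
  let F : ℕᵒᵖ ⥤ Type _ := Functor.ofOpSequence (X := B) (fun k => TypeCat.ofHom (ψ k))
  have : ∀ j : ℕᵒᵖ, Finite (F.obj j) := fun j => ‹∀ k, Finite (B k)› j.unop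
  have : ∀ j : ℕᵒᵖ, Nonempty (F.obj j) := fun j => ‹∀ k, Nonempty (B k)› j.unop
  obtain ⟨s, hs⟩ := nonempty_sections_of_finite_inverse_system F
  refine ⟨⟨fun k => s (Opposite.op k), fun k => ?_⟩⟩
  have h := hs (f := (homOfLE (Nat.le_add_right k 1)).op)
  rwa [Functor.ofOpSequence_map_homOfLE_succ] at h

theorem InvLim.exists_forall_mem [∀ k, Finite (B k)] {S : ∀ k, Set (B k)}
    (hS : ∀ k, MapsTo (ψ k) (S (k+1)) (S k)) (hne : ∀ k, ∃ j ≥ k, (S j).Nonempty) :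
    ∃ u : InvLim B ψ, ∀ k, u.val k ∈ S k := by
  have : ∀ k, Nonempty (S k) := fun k => by
    obtain ⟨j, hj, x, hx⟩ := hne k
    obtain ⟨i, rfl⟩ := Nat.exists_eq_add_of_le hj
    exact ⟨⟨_, mapsTo_bond hS k i hx⟩⟩
  obtain ⟨u⟩ := InvLim.nonempty (B := fun k => S k) (ψ := fun k => (hS k).restrict)
  exact ⟨⟨fun k => u.val k, fun k => congrArg Subtype.val (u.2 k)⟩, fun k => (u.val k).2⟩

end InverseSystem

section Fiber

variable {A : ℕ → Type*} (φ : ∀ n, A (n+1) → A n) {n : ℕ}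

/-- The preimage of `a : A n` under `φ_n^m`; it is all of `A m` when `m < n`. -/
def bondFiber (a : A n) (m : ℕ) : Set (A m) :=
  {x | ∀ k (h : n + k = m), bond φ n k (h ▸ x) = a}

theorem mem_bondFiber_add {a : A n} {k : ℕ} {x : A (n+k)} :
    x ∈ bondFiber φ a (n+k) ↔ bond φ n k x = a :=
  ⟨fun hx => hx k rfl, fun hx k' h => by obtain rfl := Nat.add_left_cancel h; exact hx⟩

theorem mapsTo_bondFiber (a : A n) (m : ℕ) :
    MapsTo (φ m) (bondFiber φ a (m+1)) (bondFiber φ a m) := fun x hx k h => by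
  subst h
  exact hx (k+1) rfl

end Fiber

section Transitivity

variable {A : ℕ → Type*} {R : ∀ n, A n → A n → Prop} {φ : ∀ n, A (n+1) → A n}

theorem exists_limRel_chain_of_forall_chain [∀ n, Finite (A n)]
    (hR : ∀ n, ∀ a b : A (n+1), R (n+1) a b → R n (φ n a) (φ n b)) {n : ℕ} {a b : A n}
    (hchain : ∀ k, ∃ x y z : A (n+k),
      R (n+k) x y ∧ R (n+k) y z ∧ bond φ n k x = a ∧ bond φ n k z = b) :
    ∃ u v w : InvLim A φ,
      limRel A R φ u v ∧ limRel A R φ v w ∧ u.val n = a ∧ w.val n = b := by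
  let S : ∀ m, Set (A m × A m × A m) := fun m =>
    {t | R m t.1 t.2.1 ∧ R m t.2.1 t.2.2 ∧ t.1 ∈ bondFiber φ a m ∧ t.2.2 ∈ bondFiber φ b m}
  have hS : ∀ m, MapsTo (fun t => (φ m t.1, φ m t.2.1, φ m t.2.2)) (S (m+1)) (S m) :=
    fun m _ ⟨hxy, hyz, hx, hz⟩ => ⟨hR m _ _ hxy, hR m _ _ hyz,
      mapsTo_bondFiber φ a m hx, mapsTo_bondFiber φ b m hz⟩
  have hne : ∀ m, ∃ j ≥ m, (S j).Nonempty := fun m => by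
    obtain ⟨x, y, z, hxy, hyz, hx, hz⟩ := hchain m
    exact ⟨n + m, Nat.le_add_left m n, (x, y, z), hxy, hyz,
      (mem_bondFiber_add φ).2 hx, (mem_bondFiber_add φ).2 hz⟩
  obtain ⟨s, hs⟩ := InvLim.exists_forall_mem hS hne
  refine ⟨⟨fun m => (s.val m).1, fun m => congrArg Prod.fst (s.2 m)⟩,
    ⟨fun m => (s.val m).2.1, fun m => congrArg (·.2.1) (s.2 m)⟩,
    ⟨fun m => (s.val m).2.2, fun m => congrArg (·.2.2) (s.2 m)⟩,
    fun m => (hs m).1, fun m => (hs m).2.1, (hs n).2.2.1 0 rfl, (hs n).2.2.2 0 rfl⟩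

theorem limRel_transitive_of_separated
    (hsep : ∀ (n : ℕ) (a b : A n), ¬ R n a b → (∃ c, R n a c ∧ R n c b) →
      ∃ k, 0 < k ∧ ∀ a' b' : A (n + k), bond φ n k a' = a → bond φ n k b' = b →
        ¬ R (n + k) a' b' ∧ ¬ ∃ c', R (n + k) a' c' ∧ R (n + k) c' b') :
    Transitive (limRel A R φ) := fun u v w huv hvw n => by
  by_contra hn
  obtain ⟨k, -, hk⟩ := hsep n _ _ hn ⟨_, huv n, hvw n⟩
  exact (hk _ _ (u.bond_val n k) (w.bond_val n k)).2 ⟨_, huv _, hvw _⟩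

end Transitivity

theorem stmt_6_general (A : ℕ → Type*) [∀ n, Fintype (A n)]
    (R : ∀ n, A n → A n → Prop)
    (hrefl : ∀ n, Reflexive (R n))
    (φ : ∀ n, A (n+1) → A n)
    (him1 : ∀ n, ∀ a b : A (n+1), R (n+1) a b → R n (φ n a) (φ n b)) :
    Transitive (limRel A R φ) ↔
      ∀ (n : ℕ) (a b : A n), ¬ R n a b → (∃ c, R n a c ∧ R n c b) →
        ∃ k, 0 < k ∧ ∀ a' b' : A (n + k), bond φ n k a' = a → bond φ n k b' = b →
          ¬ R (n + k) a' b' ∧ ¬ ∃ c', R (n + k) a' c' ∧ R (n + k) c' b' := by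
  refine ⟨fun htrans n a b hab hc => ?_, limRel_transitive_of_separated⟩
  by_contra hsep
  push Not at hsep
  have hchain : ∀ k, ∃ x y z : A (n+k),
      R (n+k) x y ∧ R (n+k) y z ∧ bond φ n k x = a ∧ bond φ n k z = b := by
    rintro (_ | k)
    · obtain ⟨c, hac, hcb⟩ := hc
      exact ⟨a, c, b, hac, hcb, rfl, rfl⟩
    · obtain ⟨a', b', ha', hb', hnear⟩ := hsep (k+1) k.succ_pos
      by_cases hab' : R _ a' b'
      · exact ⟨a', a', b', hrefl _ a', hab', ha', hb'⟩
      · obtain ⟨c', hac', hcb'⟩ := hnear hab'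
        exact ⟨a', c', b', hac', hcb', ha', hb'⟩
  obtain ⟨u, v, w, huv, hvw, rfl, rfl⟩ := exists_limRel_chain_of_forall_chain him1 hchain
  exact hab (htrans huv hvw n)

/-- `R^𝔸` is transitive iff points at `R`-distance two are eventually separated to
distance at least three. -/
theorem stmt_6 (A : ℕ → Type*) [∀ n, Fintype (A n)] [∀ n, Nonempty (A n)]
    (R : ∀ n, A n → A n → Prop)
    (hrefl : ∀ n, Reflexive (R n)) (hsymm : ∀ n, Symmetric (R n))
    (φ : ∀ n, A (n+1) → A n) (hsurj : ∀ n, Function.Surjective (φ n))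
    (him1 : ∀ n, ∀ a b : A (n+1), R (n+1) a b → R n (φ n a) (φ n b))
    (him2 : ∀ n, ∀ a b : A n, R n a b →
      ∃ a' b' : A (n+1), R (n+1) a' b' ∧ φ n a' = a ∧ φ n b' = b) :
    Transitive (limRel A R φ) ↔
      ∀ (n : ℕ) (a b : A n), ¬ R n a b → (∃ c, R n a c ∧ R n c b) →
        ∃ k, 0 < k ∧ ∀ a' b' : A (n + k), bond φ n k a' = a → bond φ n k b' = b →
          ¬ R (n + k) a' b' ∧ ¬ ∃ c', R (n + k) a' c' ∧ R (n + k) c' b' :=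
  stmt_6_general A R hrefl φ him1
end

section
/- Let (A_n, R_n, φ_n^{n+1}) be as in the context, with projective limit 𝔸 and relation R^𝔸, and assume R^𝔸 is transitive (hence a closed equivalence relation on 𝔸). Let p : 𝔸 → 𝔸/R^𝔸 be the quotient map onto the quotient topological space. Then the following are equivalent: (1) the set of points of 𝔸 whose R^𝔸-equivalence class is a singleton is dense in 𝔸; (2) for each n and each a ∈ A_n there are m > n and b ∈ A_m such that every b' with R_m(b', b) satisfies φ_n^m(b') = a; (3) p is irreducible. -/
/-!
The projective limit is compact, being a closed subspace of a product of finite discrete spaces,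
and the cylinders `{u | u n ∈ s}` are clopen and form a basis; each implication is then a
nested-intersection argument.
(2) ⇒ (1): iterating (2) from `a ∈ A n` gives points `α i ∈ A (ν i)` over `a` such that every
`R`-neighbour of `α (i+1)` lies over `α i`; a thread through all of them has a singleton class.
(1) ⇒ (3): a closed proper `K` misses a cylinder, which contains a point with singleton class,
whose class then misses `K`.
(3) ⇒ (2): if (2) fails at `a`, every thread is related to one avoiding the cylinder of `a`, so the
closed set of threads avoiding it maps onto the quotient.
-/

open Function Set

theorem Dense.quot_mk_image_ne_univ {X : Type*} [TopologicalSpace X] {r : X → X → Prop}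
    (hr : Equivalence r) (hd : Dense {u | ∀ v, r u v → v = u}) {K : Set X} (hK : IsClosed K)
    (hKne : K ≠ univ) : Quot.mk r '' K ≠ univ := by
  intro himage
  obtain ⟨u, hu⟩ := ne_univ_iff_exists_notMem K |>.mp hKne
  obtain ⟨w, hwK, hw⟩ := hd.inter_open_nonempty _ hK.isOpen_compl ⟨u, hu⟩
  obtain ⟨v, hvK, hvw⟩ := himage.symm ▸ mem_univ (Quot.mk r w)
  exact hwK (hw v (hr.symm (hr.eqvGen_iff.mp (Quot.eq.mp hvw))) ▸ hvK)

section Bond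

variable {A : ℕ → Type*} {φ : ∀ n, A (n+1) → A n}

theorem bond_eq_of_forall_lt {x : ∀ n, A n} {n k : ℕ}
    (hx : ∀ m < n + k, φ m (x (m+1)) = x m) : bond φ n k (x (n+k)) = x n := by
  induction k with
  | zero => rfl
  | succ k ih =>
    change bond φ n k (φ (n+k) (x (n+k+1))) = x n
    rw [hx (n+k) (by omega), ih fun m hm => hx m (by omega)]

theorem bond_surjective (hsurj : ∀ n, Surjective (φ n)) (n k : ℕ) :
    Surjective (bond φ n k) := by
  induction k with
  | zero => exact surjective_id
  | succ k ih => exact ih.comp (hsurj (n+k))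

theorem exists_partial_thread [∀ n, Nonempty (A n)] (N : ℕ) (b : A N) :
    ∃ x : ∀ n, A n, x N = b ∧ ∀ m < N, φ m (x (m+1)) = x m := by
  induction N with
  | zero => exact ⟨update (fun _ => Classical.arbitrary _) 0 b, by simp, by simp⟩
  | succ N ih =>
    obtain ⟨x, hxN, hx⟩ := ih (φ N b)
    refine ⟨update x (N+1) b, by simp, fun m hm => ?_⟩
    obtain hm | rfl := Nat.lt_succ_iff_lt_or_eq.mp hm
    · rw [update_of_ne (by omega), update_of_ne (by omega), hx m hm]
    · rw [update_self, update_of_ne (by omega), hxN]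

end Bond

namespace InvLim

variable {A : ℕ → Type*} {φ : ∀ n, A (n+1) → A n}

theorem bond_val_s7 (u : InvLim A φ) (n k : ℕ) : bond φ n k (u.val (n+k)) = u.val n :=
  bond_eq_of_forall_lt fun m _ => u.2 m

theorem val_eq_of_le {u v : InvLim A φ} {m N : ℕ} (h : u.val N = v.val N) (hmN : m ≤ N) :
    u.val m = v.val m :=
  Nat.decreasingInduction (fun k _ ih => by rw [← u.2 k, ← v.2 k, ih]) h hmN

theorem rel_val_of_le {R : ∀ n, A n → A n → Prop}
    (him1 : ∀ n, ∀ a b : A (n+1), R (n+1) a b → R n (φ n a) (φ n b))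
    {u v : InvLim A φ} {m N : ℕ} (h : R N (u.val N) (v.val N)) (hmN : m ≤ N) :
    R m (u.val m) (v.val m) :=
  Nat.decreasingInduction (fun k _ ih => by simpa only [u.2, v.2] using him1 k _ _ ih) h hmN

theorem eq_of_forall_val_eq {u v : InvLim A φ} {ν : ℕ → ℕ} (hν : StrictMono ν)
    (h : ∀ i, u.val (ν i) = v.val (ν i)) : u = v :=
  Subtype.ext <| funext fun m => val_eq_of_le (h m) (hν.id_le m)

instance instCompactSpace [∀ n, Finite (A n)] : CompactSpace (InvLim A φ) := by
  let _ : ∀ n, TopologicalSpace (A n) := fun _ => ⊥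
  have : ∀ n, DiscreteTopology (A n) := fun _ => ⟨rfl⟩
  have : IsClosed {u : ∀ n, A n | ∀ n, φ n (u (n+1)) = u n} := by
    simp only [ofPred_forall]
    exact isClosed_iInter fun n =>
      isClosed_eq (continuous_of_discreteTopology.comp (continuous_apply _)) (continuous_apply n)
  exact isCompact_iff_compactSpace.mp this.isCompact

theorem isClopen_setOf_val_mem (n : ℕ) (s : Set (A n)) :
    IsClopen {u : InvLim A φ | u.val n ∈ s} := by
  let _ : ∀ n, TopologicalSpace (A n) := fun _ => ⊥
  have : ∀ n, DiscreteTopology (A n) := fun _ => ⟨rfl⟩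
  exact (isClopen_discrete s).preimage ((continuous_apply n).comp continuous_subtype_val)

theorem exists_cylinder_subset {U : Set (InvLim A φ)} (hU : IsOpen U) {u : InvLim A φ}
    (hu : u ∈ U) : ∃ n, {v : InvLim A φ | v.val n = u.val n} ⊆ U := by
  let _ : ∀ n, TopologicalSpace (A n) := fun _ => ⊥
  have : ∀ n, DiscreteTopology (A n) := fun _ => ⟨rfl⟩
  obtain ⟨V, hV, rfl⟩ := isOpen_induced_iff.mp hU
  obtain ⟨I, W, hW, hsub⟩ := isOpen_pi_iff.mp hV u.val hu
  refine ⟨I.sup id, fun v hv => hsub fun i hi => ?_⟩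
  have hvi : v.val i = u.val i := val_eq_of_le hv (Finset.le_sup (f := id) hi)
  exact hvi ▸ (hW i hi).2

theorem exists_val_eq [∀ n, Finite (A n)] [∀ n, Nonempty (A n)]
    (hsurj : ∀ n, Surjective (φ n)) (n : ℕ) (a : A n) : ∃ u : InvLim A φ, u.val n = a := by
  let _ : ∀ n, TopologicalSpace (A n) := fun _ => ⊥
  have : ∀ n, DiscreteTopology (A n) := fun _ => ⟨rfl⟩
  let t : ℕ → Set (∀ m, A m) := fun N => {x | x n = a ∧ ∀ m < n + N, φ m (x (m+1)) = x m}
  have ht : ∀ N, IsClosed (t N) := fun N => by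
    simp only [t, ofPred_and, ofPred_forall]
    exact (isClosed_eq (continuous_apply n) continuous_const).inter <|
      isClosed_iInter fun m => isClosed_iInter fun _ =>
        isClosed_eq (continuous_of_discreteTopology.comp (continuous_apply _)) (continuous_apply m)
  have hne : ∀ N, (t N).Nonempty := fun N => by
    obtain ⟨b, rfl⟩ := bond_surjective hsurj n N a
    obtain ⟨x, hxb, hx⟩ := exists_partial_thread (n+N) b
    exact ⟨x, by rw [← hxb, bond_eq_of_forall_lt hx], hx⟩
  obtain ⟨x, hx⟩ := IsCompact.nonempty_iInter_of_sequence_nonempty_isCompact_isClosed t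
    (fun N x hx => ⟨hx.1, fun m hm => hx.2 m (by omega)⟩) hne (ht 0).isCompact ht
  rw [mem_iInter] at hx
  exact ⟨⟨x, fun m => (hx (m+1)).2 m (by omega)⟩, (hx 0).1⟩

end InvLim

section Relation

variable {A : ℕ → Type*} [∀ n, Finite (A n)] [∀ n, Nonempty (A n)]
  {R : ∀ n, A n → A n → Prop} {φ : ∀ n, A (n+1) → A n}

theorem exists_val_eq_forall_limRel_eq (hrefl : ∀ n a, R n a a)
    (hsymm : ∀ n a b, R n a b → R n b a) (hsurj : ∀ n, Surjective (φ n))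
    (h : ∀ (n : ℕ) (a : A n), ∃ k, 0 < k ∧ ∃ b : A (n + k),
      ∀ b', R (n + k) b' b → bond φ n k b' = a)
    (n : ℕ) (a : A n) : ∃ u : InvLim A φ, u.val n = a ∧ ∀ v, limRel A R φ u v → v = u := by
  choose k hk b hb using h
  let step : (Σ m, A m) → Σ m, A m := fun p => ⟨p.1 + k p.1 p.2, b p.1 p.2⟩
  let p : ℕ → Σ m, A m := fun i => step^[i] ⟨n, a⟩
  have hp : ∀ i, p (i+1) = step (p i) := fun i => iterate_succ_apply' step i _
  have hdown : ∀ i (v : InvLim A φ), R _ (v.val (p (i+1)).1) (p (i+1)).2 →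
      v.val (p i).1 = (p i).2 := by
    intro i v hv
    rw [hp] at hv
    rw [← v.bond_val_s7 _ (k _ _)]
    exact hb _ _ _ hv
  obtain ⟨u, hu⟩ : (⋂ i, {v : InvLim A φ | v.val (p i).1 ∈ ({(p i).2} : Set _)}).Nonempty :=
    IsCompact.nonempty_iInter_of_sequence_nonempty_isCompact_isClosed _
      (fun i v hv => hdown i v (mem_singleton_iff.mp hv ▸ hrefl _ _))
      (fun i => InvLim.exists_val_eq hsurj _ _)
      (InvLim.isClopen_setOf_val_mem _ _).isClosed.isCompact
      (fun i => (InvLim.isClopen_setOf_val_mem _ _).isClosed)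
  rw [mem_iInter] at hu
  have hmono : StrictMono fun i => (p i).1 := strictMono_nat_of_lt_succ fun i => by
    rw [hp]
    exact Nat.lt_add_of_pos_right (hk _ _)
  refine ⟨u, hu 0, fun v hv => InvLim.eq_of_forall_val_eq hmono fun i => ?_⟩
  rw [hdown i v ((hu (i+1)) ▸ hsymm _ _ _ (hv _)), hu i]

theorem dense_setOf_forall_limRel_eq (hrefl : ∀ n a, R n a a)
    (hsymm : ∀ n a b, R n a b → R n b a) (hsurj : ∀ n, Surjective (φ n))
    (h : ∀ (n : ℕ) (a : A n), ∃ k, 0 < k ∧ ∃ b : A (n + k),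
      ∀ b', R (n + k) b' b → bond φ n k b' = a) :
    Dense {u : InvLim A φ | ∀ v, limRel A R φ u v → v = u} := by
  refine dense_iff_inter_open.mpr fun U hU ⟨u, hu⟩ => ?_
  obtain ⟨n, hn⟩ := InvLim.exists_cylinder_subset hU hu
  obtain ⟨w, hw, hw'⟩ := exists_val_eq_forall_limRel_eq hrefl hsymm hsurj h n (u.val n)
  exact ⟨w, hn hw, hw'⟩

theorem exists_limRel_val_ne (him1 : ∀ n, ∀ a b : A (n+1), R (n+1) a b → R n (φ n a) (φ n b))
    (hsurj : ∀ n, Surjective (φ n)) {n : ℕ} {a : A n}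
    (h : ∀ k, 0 < k → ∀ b : A (n + k), ∃ b', R (n + k) b' b ∧ bond φ n k b' ≠ a)
    (u : InvLim A φ) : ∃ v, limRel A R φ v u ∧ v.val n ≠ a := by
  let t : ℕ → Set (InvLim A φ) := fun j =>
    {v | v.val n ∈ ({a}ᶜ : Set _)} ∩ {v | R j (v.val j) (u.val j)}
  have ht : ∀ j, IsClosed (t j) := fun j =>
    (InvLim.isClopen_setOf_val_mem n _).isClosed.inter
      (InvLim.isClopen_setOf_val_mem j {x | R j x (u.val j)}).isClosed
  have hne : ∀ j, (t j).Nonempty := fun j => by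
    obtain ⟨b', hb'u, hb'a⟩ := h (j+1) j.succ_pos (u.val (n+(j+1)))
    obtain ⟨v, hv⟩ := InvLim.exists_val_eq hsurj _ b'
    refine ⟨v, ?_, InvLim.rel_val_of_le him1 (N := n+(j+1)) (hv ▸ hb'u) (by omega)⟩
    show v.val n ≠ a
    rwa [← v.bond_val_s7 n (j+1), hv]
  obtain ⟨v, hv⟩ := IsCompact.nonempty_iInter_of_sequence_nonempty_isCompact_isClosed t
    (fun j v hv => ⟨hv.1, InvLim.rel_val_of_le him1 hv.2 j.le_succ⟩)
    hne (ht 0).isCompact ht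
  rw [mem_iInter] at hv
  exact ⟨v, fun j => (hv j).2, (hv 0).1⟩

theorem exists_bond_eq_of_image_ne_univ
    (him1 : ∀ n, ∀ a b : A (n+1), R (n+1) a b → R n (φ n a) (φ n b))
    (hsurj : ∀ n, Surjective (φ n))
    (h : ∀ K : Set (InvLim A φ), IsClosed K → K ≠ univ → Quot.mk (limRel A R φ) '' K ≠ univ)
    (n : ℕ) (a : A n) :
    ∃ k, 0 < k ∧ ∃ b : A (n + k), ∀ b', R (n + k) b' b → bond φ n k b' = a := by
  by_contra! hna
  refine h {v | v.val n ∈ ({a}ᶜ : Set _)} (InvLim.isClopen_setOf_val_mem n _).isClosed ?_ ?_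
  · obtain ⟨u, hu⟩ := InvLim.exists_val_eq hsurj n a
    exact ne_univ_iff_exists_notMem _ |>.mpr ⟨u, fun hu' => hu' hu⟩
  · refine eq_univ_of_forall (Quot.ind fun u => ?_)
    obtain ⟨v, hvu, hv⟩ := exists_limRel_val_ne him1 hsurj hna u
    exact ⟨v, hv, Quot.sound hvu⟩

end Relation

theorem stmt_7_general (A : ℕ → Type*) [∀ n, Fintype (A n)] [∀ n, Nonempty (A n)]
    (R : ∀ n, A n → A n → Prop)
    (hrefl : ∀ n, Reflexive (R n)) (hsymm : ∀ n, Symmetric (R n))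
    (φ : ∀ n, A (n+1) → A n) (hsurj : ∀ n, Function.Surjective (φ n))
    (him1 : ∀ n, ∀ a b : A (n+1), R (n+1) a b → R n (φ n a) (φ n b))
    (htrans : Transitive (limRel A R φ)) :
    List.TFAE [
      Dense {u : InvLim A φ | ∀ v, limRel A R φ u v → v = u},
      ∀ (n : ℕ) (a : A n), ∃ k, 0 < k ∧ ∃ b : A (n + k),
        ∀ b', R (n + k) b' b → bond φ n k b' = a,
      ∀ K : Set (InvLim A φ), IsClosed K → K ≠ Set.univ →
        Quot.mk (limRel A R φ) '' K ≠ Set.univ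
    ] := by
  have hequiv : Equivalence (limRel A R φ) :=
    ⟨fun _ n => hrefl n _, fun h n => hsymm n (h n), fun h₁ h₂ => htrans h₁ h₂⟩
  tfae_have 1 → 3 := fun hd _ hK hKne => hd.quot_mk_image_ne_univ hequiv hK hKne
  tfae_have 2 → 1 := dense_setOf_forall_limRel_eq hrefl hsymm hsurj
  tfae_have 3 → 2 := exists_bond_eq_of_image_ne_univ him1 hsurj
  tfae_finish

/-- For a fine projective sequence the following are equivalent: the points with singleton
equivalence class are dense; a combinatorial condition on the sequence; the quotient map
is irreducible. -/
theorem stmt_7 (A : ℕ → Type*) [∀ n, Fintype (A n)] [∀ n, Nonempty (A n)]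
    (R : ∀ n, A n → A n → Prop)
    (hrefl : ∀ n, Reflexive (R n)) (hsymm : ∀ n, Symmetric (R n))
    (φ : ∀ n, A (n+1) → A n) (hsurj : ∀ n, Function.Surjective (φ n))
    (him1 : ∀ n, ∀ a b : A (n+1), R (n+1) a b → R n (φ n a) (φ n b))
    (him2 : ∀ n, ∀ a b : A n, R n a b →
      ∃ a' b' : A (n+1), R (n+1) a' b' ∧ φ n a' = a ∧ φ n b' = b)
    (htrans : Transitive (limRel A R φ)) :
    List.TFAE [
      Dense {u : InvLim A φ | ∀ v, limRel A R φ u v → v = u},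
      ∀ (n : ℕ) (a : A n), ∃ k, 0 < k ∧ ∃ b : A (n + k),
        ∀ b', R (n + k) b' b → bond φ n k b' = a,
      ∀ K : Set (InvLim A φ), IsClosed K → K ≠ Set.univ →
        Quot.mk (limRel A R φ) '' K ≠ Set.univ
    ] :=
  stmt_7_general A R hrefl hsymm φ hsurj him1 htrans
end

section
/- Let A be a zero-dimensional compact metrizable space and let E be a closed equivalence relation on A (closed as a subset of A × A). If B ⊆ A is closed and E-connected, then the image of B under the quotient map p : A → A/E is closed and connected in the quotient space A/E. -/
/-- `B` is `E`-connected: any clopen splitting of `B` into two nonempty pieces contains an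
`E`-related pair across the two pieces. -/
def EConnected {A : Type*} [TopologicalSpace A] (E : A → A → Prop) (B : Set A) : Prop :=
  ∀ U U' : Set A, IsClopen U → IsClopen U' → B ⊆ U ∪ U' → U ∩ U' ∩ B = ∅ →
    (U ∩ B).Nonempty → (U' ∩ B).Nonempty → ∃ x ∈ U ∩ B, ∃ x' ∈ U' ∩ B, E x x'

/-- In a zero-dimensional space, a compact set disjoint from a closed set can be
covered by a clopen set disjoint from the closed set. -/
lemma exists_clopen_sep {A : Type*} [TopologicalSpace A]
    (hzd : TopologicalSpace.IsTopologicalBasis {U : Set A | IsClopen U})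
    {K C : Set A} (hK : IsCompact K) (hC : IsClosed C) (hdis : Disjoint K C) :
    ∃ U : Set A, IsClopen U ∧ K ⊆ U ∧ Disjoint U C := by
  have hsub : K ⊆ Cᶜ := Set.disjoint_left.mp hdis
  -- for each x in K choose a clopen neighborhood inside Cᶜ
  have hx : ∀ x ∈ K, ∃ V : Set A, IsClopen V ∧ x ∈ V ∧ V ⊆ Cᶜ := by
    intro x hxK
    obtain ⟨V, hV, hxV, hVs⟩ := hzd.exists_subset_of_mem_open (hsub hxK) hC.isOpen_compl
    exact ⟨V, hV, hxV, hVs⟩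
  choose! V hVclopen hVmem hVsub using hx
  have hcover : K ⊆ ⋃ x ∈ K, V x := fun x hxK => Set.mem_biUnion hxK (hVmem x hxK)
  obtain ⟨t, htK, htfin, htcov⟩ := hK.elim_finite_subcover_image
    (fun x hxK => (hVclopen x hxK).isOpen) hcover
  refine ⟨⋃ x ∈ t, V x, ?_, htcov, ?_⟩
  · exact Set.Finite.isClopen_biUnion htfin (fun x hxt => hVclopen x (htK hxt))
  · rw [Set.disjoint_left]
    rintro a ha haC
    obtain ⟨x, hxt, hax⟩ := Set.mem_iUnion₂.mp ha
    exact hVsub x (htK hxt) hax haC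

/-- The image of a closed `E`-connected set under the quotient map by a closed equivalence
relation on a zero-dimensional compact metrizable space is closed and connected. -/
theorem stmt_8 (A : Type*) [TopologicalSpace A] [CompactSpace A]
    [TopologicalSpace.MetrizableSpace A]
    (hzd : TopologicalSpace.IsTopologicalBasis {U : Set A | IsClopen U})
    (E : A → A → Prop) (hE : Equivalence E) (hEcl : IsClosed {p : A × A | E p.1 p.2})
    (B : Set A) (hB : IsClosed B) (hBE : EConnected E B) :
    IsClosed (Quot.mk E '' B) ∧ IsPreconnected (Quot.mk E '' B) ∧
      (B.Nonempty → IsConnected (Quot.mk E '' B)) := by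
  haveI : T2Space A := inferInstance
  set p : A → Quot E := Quot.mk E with hp
  have hpc : Continuous p := continuous_quot_mk
  have hqm : Topology.IsQuotientMap p := isQuotientMap_quot_mk
  have hmk : ∀ a b : A, p a = p b ↔ E a b := by
    intro a b
    rw [Quot.eq]
    exact ⟨fun h => (Equivalence.eqvGen_iff hE).mp h, Relation.EqvGen.rel a b⟩
  -- closedness of the image
  have hclosed : IsClosed (p '' B) := by
    rw [← hqm.isClosed_preimage]
    have heq : p ⁻¹' (p '' B) =
        Prod.fst '' ({q : A × A | E q.1 q.2} ∩ Set.univ ×ˢ B) := by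
      ext a
      constructor
      · rintro ⟨b, hbB, hpb⟩
        exact ⟨(a, b), ⟨(hmk a b).mp hpb.symm, ⟨trivial, hbB⟩⟩, rfl⟩
      · rintro ⟨⟨a', b⟩, ⟨hab, ⟨-, hbB⟩⟩, rfl⟩
        exact ⟨b, hbB, ((hmk a' b).mpr hab).symm⟩
    rw [heq]
    exact ((hEcl.inter (isClosed_univ.prod hB)).isCompact.image continuous_fst).isClosed
  -- preconnectedness
  have hpre : IsPreconnected (p '' B) := by
    intro u v hu hv hcov ⟨y1, hy1s, hy1u⟩ ⟨y2, hy2s, hy2v⟩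
    by_contra hne
    rw [Set.not_nonempty_iff_eq_empty] at hne
    set K1 : Set A := B ∩ (p ⁻¹' v)ᶜ with hK1
    set K2 : Set A := B ∩ (p ⁻¹' u)ᶜ with hK2
    have hK1cl : IsClosed K1 := hB.inter (hv.preimage hpc).isClosed_compl
    have hK2cl : IsClosed K2 := hB.inter (hu.preimage hpc).isClosed_compl
    have hdis : Disjoint K1 K2 := by
      rw [Set.disjoint_left]
      rintro x ⟨hxB, hxv⟩ ⟨-, hxu⟩
      rcases hcov ⟨x, hxB, rfl⟩ with h | h
      exacts [hxu h, hxv h]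
    obtain ⟨U, hUcl, hK1U, hUK2⟩ := exists_clopen_sep hzd hK1cl.isCompact hK2cl hdis
    obtain ⟨b1, hb1B, hb1⟩ := hy1s
    obtain ⟨b2, hb2B, hb2⟩ := hy2s
    have hb1K1 : b1 ∈ K1 := ⟨hb1B, fun h => Set.eq_empty_iff_forall_notMem.mp hne y1
      ⟨⟨b1, hb1B, hb1⟩, hy1u, hb1 ▸ h⟩⟩
    have hb2K2 : b2 ∈ K2 := ⟨hb2B, fun h => Set.eq_empty_iff_forall_notMem.mp hne y2
      ⟨⟨b2, hb2B, hb2⟩, hb2 ▸ h, hy2v⟩⟩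
    obtain ⟨x, ⟨hxU, hxB⟩, x', ⟨hxU', hxB'⟩, hExx'⟩ :=
      hBE U Uᶜ hUcl hUcl.compl (fun a _ => (em (a ∈ U)).imp id id)
        (by simp) ⟨b1, hK1U hb1K1, hb1B⟩ ⟨b2, fun h => Set.disjoint_left.mp hUK2 h hb2K2, hb2B⟩
    have hxu : p x ∈ u := by
      by_contra h
      exact Set.disjoint_left.mp hUK2 hxU ⟨hxB, h⟩
    have hxv : p x' ∈ v := by
      by_contra h
      exact hxU' (hK1U ⟨hxB', h⟩)
    have hpeq : p x = p x' := Quot.sound hExx'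
    exact Set.eq_empty_iff_forall_notMem.mp hne (p x)
      ⟨⟨x, hxB, rfl⟩, hxu, hpeq ▸ hxv⟩
  refine ⟨hclosed, hpre, fun ⟨b, hb⟩ => ⟨⟨p b, b, hb, rfl⟩, hpre⟩⟩
end

section
/- Let X, Y be compact metrizable spaces and f : X → Y a continuous, surjective, irreducible map. If 𝒞 is a regular quasi-partition of X, then { f[C] : C ∈ 𝒞 } is a regular quasi-partition of Y, and the map C ↦ f[C] is a bijection from 𝒞 onto { f[C] : C ∈ 𝒞 }. -/
/-!
The point is the kernel image `f^♯ U = {y | f⁻¹ {y} ⊆ U}` (`Set.kernImage`). For a closed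
irreducible surjection `f`, the set `f^♯ U` of a nonempty open `U` is open and nonempty, hence
dense in `f '' closure U`, and `interior (f '' C) = f^♯ (interior C)` for closed `C`. Therefore
`f` maps regular closed sets to regular closed sets, and if `interior C` misses `C'` then
`interior (f '' C)` misses `f '' C'`; the latter also forces `f '' C ≠ f '' C'`, because a
nonempty regular closed set has nonempty interior.
-/

/-- A regular closed set: a closed set equal to the closure of its interior. -/
def IsRegularClosed {X : Type*} [TopologicalSpace X] (C : Set X) : Prop :=
  IsClosed C ∧ C = closure (interior C)

/-- A regular quasi-partition: a covering by nonempty regular closed sets such that any two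
distinct members intersect only on their boundaries. -/
def IsRegQuasiPartition {X : Type*} [TopologicalSpace X] (𝒞 : Set (Set X)) : Prop :=
  ⋃₀ 𝒞 = Set.univ ∧ (∀ C ∈ 𝒞, C.Nonempty ∧ IsRegularClosed C) ∧
    ∀ C ∈ 𝒞, ∀ C' ∈ 𝒞, C ≠ C' → C ∩ C' ⊆ frontier C ∩ frontier C'

open Set Function

section

variable {X Y : Type*} {f : X → Y}

theorem Function.Surjective.kernImage_subset_image (hfs : Surjective f) (s : Set X) :
    kernImage f s ⊆ f '' s := by
  intro y hy
  obtain ⟨x, rfl⟩ := hfs y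
  exact mem_image_of_mem f (hy rfl)

theorem disjoint_kernImage_image {s t : Set X} (h : Disjoint s t) :
    Disjoint (kernImage f s) (f '' t) := by
  rw [kernImage_eq_compl, disjoint_compl_left_iff_subset]
  exact image_mono h.subset_compl_left

variable [TopologicalSpace X]

theorem IsRegularClosed.interior_nonempty {C : Set X} (hC : IsRegularClosed C)
    (hne : C.Nonempty) : (interior C).Nonempty := by
  rw [nonempty_iff_ne_empty] at hne ⊢
  intro h
  exact hne (by rw [hC.2, h, closure_empty])

theorem inter_subset_frontier_inter_iff {C D : Set X} (hC : IsClosed C) (hD : IsClosed D) :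
    C ∩ D ⊆ frontier C ∩ frontier D ↔ Disjoint (interior C) D ∧ Disjoint C (interior D) := by
  rw [hC.frontier_eq, hD.frontier_eq, disjoint_left, disjoint_left]
  constructor
  · intro h
    exact ⟨fun x hxC hxD ↦ (h ⟨interior_subset hxC, hxD⟩).1.2 hxC,
      fun x hxC hxD ↦ (h ⟨hxC, interior_subset hxD⟩).2.2 hxD⟩
  · rintro ⟨hCD, hDC⟩ x ⟨hxC, hxD⟩
    exact ⟨⟨hxC, fun hx ↦ hCD hx hxD⟩, ⟨hxD, fun hx ↦ hDC hxC hx⟩⟩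

def IsIrreducibleMap (f : X → Y) : Prop :=
  ∀ K : Set X, IsClosed K → K ≠ univ → f '' K ≠ univ

theorem IsIrreducibleMap.kernImage_nonempty (hirr : IsIrreducibleMap f) {U : Set X}
    (hU : IsOpen U) (hne : U.Nonempty) : (kernImage f U).Nonempty := by
  rw [kernImage_eq_compl, nonempty_compl]
  exact hirr Uᶜ hU.isClosed_compl (compl_ne_univ.mpr hne)

variable [TopologicalSpace Y]

namespace IsIrreducibleMap

theorem image_closure_subset_closure_kernImage (hirr : IsIrreducibleMap f) (hf : Continuous f)
    (hfs : Surjective f) {U : Set X} (hU : IsOpen U) :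
    f '' closure U ⊆ closure (kernImage f U) := by
  rintro _ ⟨x, hx, rfl⟩
  rw [mem_closure_iff]
  intro V hV hxV
  have hW : IsOpen (f ⁻¹' V ∩ U) := (hV.preimage hf).inter hU
  obtain ⟨y, hy⟩ := hirr.kernImage_nonempty hW (mem_closure_iff.mp hx _ (hV.preimage hf) hxV)
  obtain ⟨z, rfl⟩ := hfs y
  exact ⟨f z, (hy rfl).1, kernImage_mono inter_subset_right hy⟩

theorem interior_image_eq_kernImage_interior (hirr : IsIrreducibleMap f) (hf : Continuous f)
    (hfc : IsClosedMap f) (hfs : Surjective f) {C : Set X} (hC : IsClosed C) :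
    interior (f '' C) = kernImage f (interior C) := by
  refine subset_antisymm (subset_kernImage_iff.mpr ?_) ?_
  · refine interior_maximal ?_ (isOpen_interior.preimage hf)
    intro x hx
    by_contra hxC
    -- a point of `f '' C` whose fibre avoids `C`
    obtain ⟨y, hy⟩ := hirr.kernImage_nonempty
      ((isOpen_interior.preimage hf).inter hC.isOpen_compl) ⟨x, hx, hxC⟩
    obtain ⟨z, rfl⟩ := hfs y
    obtain ⟨c, hc, hcz⟩ := interior_subset (hy rfl).1
    exact (hy hcz).2 hc
  · exact interior_maximal ((hfs.kernImage_subset_image _).trans (image_mono interior_subset))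
      (isClosedMap_iff_kernImage.mp hfc isOpen_interior)

theorem isRegularClosed_image (hirr : IsIrreducibleMap f) (hf : Continuous f)
    (hfc : IsClosedMap f) (hfs : Surjective f) {C : Set X} (hC : IsRegularClosed C) :
    IsRegularClosed (f '' C) := by
  refine ⟨hfc C hC.1, (closure_minimal interior_subset (hfc C hC.1)).antisymm' ?_⟩
  calc f '' C = f '' closure (interior C) := congrArg _ hC.2
    _ ⊆ closure (kernImage f (interior C)) :=
      hirr.image_closure_subset_closure_kernImage hf hfs isOpen_interior
    _ = closure (interior (f '' C)) := by
      rw [hirr.interior_image_eq_kernImage_interior hf hfc hfs hC.1]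

end IsIrreducibleMap

namespace IsRegQuasiPartition

theorem disjoint_interior {𝒞 : Set (Set X)} (h𝒞 : IsRegQuasiPartition 𝒞) {C D : Set X}
    (hC : C ∈ 𝒞) (hD : D ∈ 𝒞) (hCD : C ≠ D) : Disjoint (interior C) D :=
  ((inter_subset_frontier_inter_iff ((h𝒞.2.1 C hC).2.1) ((h𝒞.2.1 D hD).2.1)).mp
    (h𝒞.2.2 C hC D hD hCD)).1

theorem disjoint_interior_image {𝒞 : Set (Set X)} (h𝒞 : IsRegQuasiPartition 𝒞)
    (hirr : IsIrreducibleMap f) (hf : Continuous f) (hfc : IsClosedMap f) (hfs : Surjective f)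
    {C D : Set X} (hC : C ∈ 𝒞) (hD : D ∈ 𝒞) (hCD : C ≠ D) :
    Disjoint (interior (f '' C)) (f '' D) := by
  rw [hirr.interior_image_eq_kernImage_interior hf hfc hfs (h𝒞.2.1 C hC).2.1]
  exact disjoint_kernImage_image (h𝒞.disjoint_interior hC hD hCD)

theorem injOn_image {𝒞 : Set (Set X)} (h𝒞 : IsRegQuasiPartition 𝒞)
    (hirr : IsIrreducibleMap f) (hf : Continuous f) (hfc : IsClosedMap f) (hfs : Surjective f) :
    InjOn (image f) 𝒞 := by
  intro C hC D hD hCD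
  by_contra hne
  have hdisj := h𝒞.disjoint_interior_image hirr hf hfc hfs hC hD hne
  rw [← hCD] at hdisj
  obtain ⟨hCne, hCreg⟩ := h𝒞.2.1 C hC
  obtain ⟨y, hy⟩ := (hirr.isRegularClosed_image hf hfc hfs hCreg).interior_nonempty
    (hCne.image f)
  exact disjoint_left.mp hdisj hy (interior_subset hy)

theorem image {𝒞 : Set (Set X)} (h𝒞 : IsRegQuasiPartition 𝒞)
    (hirr : IsIrreducibleMap f) (hf : Continuous f) (hfc : IsClosedMap f) (hfs : Surjective f) :
    IsRegQuasiPartition (image f '' 𝒞) := by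
  have hmem := h𝒞.2.1
  refine ⟨?_, ?_, ?_⟩
  · rw [sUnion_image, ← image_iUnion₂, ← sUnion_eq_biUnion, h𝒞.1, image_univ, hfs.range_eq]
  · rintro _ ⟨C, hC, rfl⟩
    exact ⟨(hmem C hC).1.image f, hirr.isRegularClosed_image hf hfc hfs (hmem C hC).2⟩
  · rintro _ ⟨C, hC, rfl⟩ _ ⟨D, hD, rfl⟩ hCD
    have hne : C ≠ D := fun h ↦ hCD (h ▸ rfl)
    exact (inter_subset_frontier_inter_iff (hfc C (hmem C hC).2.1) (hfc D (hmem D hD).2.1)).mpr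
      ⟨h𝒞.disjoint_interior_image hirr hf hfc hfs hC hD hne,
        (h𝒞.disjoint_interior_image hirr hf hfc hfs hD hC hne.symm).symm⟩

end IsRegQuasiPartition

end

theorem stmt_9_general (X Y : Type*) [TopologicalSpace X] [TopologicalSpace Y]
    [CompactSpace X]
    [TopologicalSpace.MetrizableSpace Y]
    (f : X → Y) (hf : Continuous f) (hfs : Function.Surjective f)
    (hirr : ∀ K : Set X, IsClosed K → K ≠ Set.univ → f '' K ≠ Set.univ)
    (𝒞 : Set (Set X)) (h𝒞 : IsRegQuasiPartition 𝒞) :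
    IsRegQuasiPartition (Set.image f '' 𝒞) ∧ Set.InjOn (Set.image f) 𝒞 :=
  ⟨h𝒞.image hirr hf hf.isClosedMap hfs, h𝒞.injOn_image hirr hf hf.isClosedMap hfs⟩

/-- The image of a regular quasi-partition under a continuous surjective irreducible map
between compact metrizable spaces is a regular quasi-partition, and taking images is a
bijection onto it. -/
theorem stmt_9 (X Y : Type*) [TopologicalSpace X] [TopologicalSpace Y]
    [CompactSpace X] [CompactSpace Y]
    [TopologicalSpace.MetrizableSpace X] [TopologicalSpace.MetrizableSpace Y]
    (f : X → Y) (hf : Continuous f) (hfs : Function.Surjective f)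
    (hirr : ∀ K : Set X, IsClosed K → K ≠ Set.univ → f '' K ≠ Set.univ)
    (𝒞 : Set (Set X)) (h𝒞 : IsRegQuasiPartition 𝒞) :
    IsRegQuasiPartition (Set.image f '' 𝒞) ∧ Set.InjOn (Set.image f) 𝒞 :=
  stmt_9_general X Y f hf hfs hirr 𝒞 h𝒞
end

section
/- Let X be a zero-dimensional compact metrizable space and (m, M) a fancy pair of functions on X. For each ε > 0 and each partition 𝒰 of X into nonempty clopen sets, there is a partition 𝒲 of X into nonempty clopen sets refining 𝒰 (each member of 𝒲 is contained in some member of 𝒰) such that for every U ∈ 𝒲 there is a point x_U ∈ U with m(x_U) − min{ m(x) : x ∈ U } < ε and max{ M(x) : x ∈ U } − M(x_U) < ε. -/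
open TopologicalSpace Set

/-- Refinement lemma for fancy pairs: every clopen partition of a zero-dimensional compact
metrizable space can be refined by a clopen partition on each member of which the fancy
pair almost attains its extremal values at a common point. -/
theorem stmt_10 (X : Type*) [TopologicalSpace X] [CompactSpace X]
    [TopologicalSpace.MetrizableSpace X]
    (hzd : TopologicalSpace.IsTopologicalBasis {U : Set X | IsClopen U})
    (m M : X → ℝ) (hm : LowerSemicontinuous m) (hM : UpperSemicontinuous M)
    (hm0 : ∀ x, 0 ≤ m x) (hM1 : ∀ x, M x ≤ 1) (hmM : ∀ x, m x ≤ M x)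
    (ε : ℝ) (hε : 0 < ε)
    (𝒰 : Set (Set X)) (h𝒰cl : ∀ U ∈ 𝒰, U.Nonempty ∧ IsClopen U)
    (h𝒰cov : ⋃₀ 𝒰 = Set.univ)
    (h𝒰dis : ∀ U ∈ 𝒰, ∀ V ∈ 𝒰, U ≠ V → Disjoint U V) :
    ∃ 𝒲 : Set (Set X),
      (∀ W ∈ 𝒲, W.Nonempty ∧ IsClopen W) ∧ ⋃₀ 𝒲 = Set.univ ∧
      (∀ W ∈ 𝒲, ∀ V ∈ 𝒲, W ≠ V → Disjoint W V) ∧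
      (∀ W ∈ 𝒲, ∃ U ∈ 𝒰, W ⊆ U) ∧
      ∀ W ∈ 𝒲, ∃ x ∈ W, m x - sInf (m '' W) < ε ∧ sSup (M '' W) - M x < ε := by
  classical
  rcases isEmpty_or_nonempty X with hX | hX
  · refine ⟨∅, by simp, ?_, by simp, by simp, by simp⟩
    have : (Set.univ : Set X) = ∅ := by
      simp [Set.eq_empty_of_isEmpty]
    simp [this]
  -- second countability
  haveI : SecondCountableTopology X := by
    letI : MetricSpace X := TopologicalSpace.metrizableSpaceMetric X
    infer_instance
  obtain ⟨b, hbc, -, hb⟩ := exists_countable_basis X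
  -- a countable family of clopen sets which suffices as a basis
  set g : Set X × Set X → Set X := fun p =>
    if h : ∃ c : Set X, IsClopen c ∧ p.1 ⊆ c ∧ c ⊆ p.2 then h.choose else ∅ with hg
  have hgval : ∀ p (h : ∃ c : Set X, IsClopen c ∧ p.1 ⊆ c ∧ c ⊆ p.2), g p = h.choose := by
    intro p h
    rw [hg]
    exact dif_pos h
  have hgclopen : ∀ p, IsClopen (g p) := by
    intro p
    by_cases h : ∃ c : Set X, IsClopen c ∧ p.1 ⊆ c ∧ c ⊆ p.2
    · rw [hgval p h]; exact h.choose_spec.1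
    · have : g p = ∅ := by rw [hg]; exact dif_neg h
      rw [this]; exact isClopen_empty
  set P : Set (Set X × Set X) := (b ×ˢ b) ∩ {p | ∃ c : Set X, IsClopen c ∧ p.1 ⊆ c ∧ c ⊆ p.2}
    with hP
  have hPc : P.Countable := ((hbc.prod hbc).mono (Set.inter_subset_left)).mono le_rfl
  -- key property of the family: every point in every open set is captured
  have hcfam : ∀ (x : X) (O : Set X), IsOpen O → x ∈ O → ∃ p ∈ P, x ∈ g p ∧ g p ⊆ O := by
    intro x O hO hxO
    obtain ⟨t, htb, hxt, htO⟩ := hb.exists_subset_of_mem_open hxO hO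
    obtain ⟨c, hc, hxc, hct⟩ := hzd.exists_subset_of_mem_open hxt (hb.isOpen htb)
    obtain ⟨s, hsb, hxs, hsc⟩ := hb.exists_subset_of_mem_open hxc hc.2
    have hpP : (s, t) ∈ P := ⟨Set.mk_mem_prod hsb htb, ⟨c, hc, hsc, hct⟩⟩
    have hex : ∃ c : Set X, IsClopen c ∧ (s, t).1 ⊆ c ∧ c ⊆ (s, t).2 := ⟨c, hc, hsc, hct⟩
    have hsp := hex.choose_spec
    have hgv := hgval (s, t) hex
    exact ⟨(s, t), hpP, hgv ▸ hsp.2.1 hxs, hgv ▸ fun y hy => htO (hsp.2.2 hy)⟩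
  -- enumerate the family
  have hFne : (g '' P).Nonempty ∨ True := Or.inr trivial
  have hFc : (g '' P).Countable := hPc.image g
  obtain ⟨x₀⟩ := hX
  have hne : (g '' P).Nonempty := by
    obtain ⟨p, hp, -, -⟩ := hcfam x₀ Set.univ isOpen_univ (Set.mem_univ x₀)
    exact ⟨g p, ⟨p, hp, rfl⟩⟩
  obtain ⟨f, hf⟩ := hFc.exists_eq_range hne
  have hfclopen : ∀ n, IsClopen (f n) := by
    intro n
    have : f n ∈ g '' P := hf ▸ Set.mem_range_self n
    obtain ⟨p, -, hp⟩ := this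
    exact hp ▸ hgclopen p
  have hfbasis : ∀ (x : X) (O : Set X), IsOpen O → x ∈ O → ∃ n, x ∈ f n ∧ f n ⊆ O := by
    intro x O hO hxO
    obtain ⟨p, hp, hxp, hpO⟩ := hcfam x O hO hxO
    have : g p ∈ Set.range f := hf ▸ Set.mem_image_of_mem g hp
    obtain ⟨n, hn⟩ := this
    exact ⟨n, hn ▸ hxp, hn ▸ hpO⟩
  -- the member of 𝒰 containing each point
  have hUex : ∀ x : X, ∃ U, U ∈ 𝒰 ∧ x ∈ U := by
    intro x
    have : x ∈ ⋃₀ 𝒰 := h𝒰cov ▸ Set.mem_univ x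
    obtain ⟨U, hU, hxU⟩ := this
    exact ⟨U, hU, hxU⟩
  choose U hU𝒰 hxU using hUex
  have hUeq : ∀ {x y : X}, y ∈ U x → U y = U x := by
    intro x y hy
    by_contra hne'
    exact (h𝒰dis _ (hU𝒰 y) _ (hU𝒰 x) hne').ne_of_mem (hxU y) hy rfl
  -- atoms
  set Atom : ℕ → X → Set X := fun n x =>
    U x ∩ ⋂ k ∈ Finset.range (n + 1), (if x ∈ f k then f k else (f k)ᶜ) with hAtom
  have memAtom : ∀ {n x y}, y ∈ Atom n x ↔ y ∈ U x ∧ ∀ k ≤ n, (y ∈ f k ↔ x ∈ f k) := by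
    intro n x y
    rw [hAtom]
    simp only [Set.mem_inter_iff, Set.mem_iInter, Finset.mem_range, Nat.lt_succ_iff]
    constructor
    · rintro ⟨h1, h2⟩
      refine ⟨h1, fun k hk => ?_⟩
      have := h2 k hk
      split_ifs at this with h
      · exact ⟨fun _ => h, fun _ => this⟩
      · exact ⟨fun hy => absurd hy this, fun hx => absurd hx h⟩
    · rintro ⟨h1, h2⟩
      refine ⟨h1, fun k hk => ?_⟩
      split_ifs with h
      · exact (h2 k hk).mpr h
      · exact fun hy => h ((h2 k hk).mp hy)
  have hselfAtom : ∀ n x, x ∈ Atom n x := fun n x =>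
    memAtom.mpr ⟨hxU x, fun _ _ => Iff.rfl⟩
  have hAtomClopen : ∀ n x, IsClopen (Atom n x) := by
    intro n x
    rw [hAtom]
    refine IsClopen.inter ((h𝒰cl _ (hU𝒰 x)).2) ?_
    refine isClopen_biInter_finset fun k _ => ?_
    split_ifs
    · exact hfclopen k
    · exact (hfclopen k).compl
  have hAtomMono : ∀ {n n' : ℕ} (x : X), n ≤ n' → Atom n' x ⊆ Atom n x := by
    intro n n' x h y hy
    rw [memAtom] at hy ⊢
    exact ⟨hy.1, fun k hk => hy.2 k (hk.trans h)⟩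
  have hAtomEq : ∀ {n x y}, y ∈ Atom n x → Atom n y = Atom n x := by
    intro n x y hy
    rw [memAtom] at hy
    have hUyx : U y = U x := hUeq hy.1
    ext w
    rw [memAtom, memAtom, hUyx]
    exact and_congr_right fun _ =>
      forall₂_congr fun k hk => by rw [hy.2 k hk]
  -- goodness
    -- Good A: there is a witness z ∈ A controlling m from below and M from above
  set Good : Set X → Prop := fun A =>
    ∃ z ∈ A, ∀ w ∈ A, m z - ε / 2 < m w ∧ M w < M z + ε / 2 with hGood
  have hex : ∀ x : X, ∃ n, Good (Atom n x) := by
    intro x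
    set O : Set X := (m ⁻¹' Set.Ioi (m x - ε / 2)) ∩ (M ⁻¹' Set.Iio (M x + ε / 2)) with hO
    have hOopen : IsOpen O :=
      (hm.isOpen_preimage _).inter (hM.isOpen_preimage _)
    have hxO : x ∈ O := by
      constructor
      · simp only [Set.mem_preimage, Set.mem_Ioi]; linarith
      · simp only [Set.mem_preimage, Set.mem_Iio]; linarith
    obtain ⟨k, hxk, hkO⟩ := hfbasis x O hOopen hxO
    refine ⟨k, x, hselfAtom k x, fun w hw => ?_⟩
    have hwk : w ∈ f k := ((memAtom.mp hw).2 k le_rfl).mpr hxk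
    have hwO := hkO hwk
    exact ⟨hwO.1, hwO.2⟩
  set N : X → ℕ := fun x => Nat.find (hex x) with hN
  have hNgood : ∀ x, Good (Atom (N x) x) := fun x => Nat.find_spec (hex x)
  set Wf : X → Set X := fun x => Atom (N x) x with hWf
  -- the key rigidity: overlapping pieces coincide
  have hkey : ∀ x y : X, N x ≤ N y → (Wf x ∩ Wf y).Nonempty → Wf x = Wf y := by
    intro x y hle ⟨z, hzx, hzy⟩
    have h1 : z ∈ Atom (N x) y := hAtomMono y hle hzy
    have h2 : Atom (N x) z = Atom (N x) x := hAtomEq hzx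
    have h3 : Atom (N x) z = Atom (N x) y := hAtomEq h1
    have hyx : y ∈ Atom (N x) x := by
      rw [← h2, h3]; exact hselfAtom _ y
    have h4 : Atom (N x) y = Atom (N x) x := hAtomEq hyx
    have hgoody : Good (Atom (N x) y) := h4 ▸ hNgood x
    have hNy : N y ≤ N x := Nat.find_le hgoody
    have : N y = N x := le_antisymm hNy hle
    rw [hWf]
    simp only
    rw [this, h4]
  refine ⟨Set.range Wf, ?_, ?_, ?_, ?_, ?_⟩
  · rintro W ⟨x, rfl⟩
    exact ⟨⟨x, hselfAtom _ x⟩, hAtomClopen _ x⟩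
  · apply Set.eq_univ_of_forall
    intro x
    exact ⟨Wf x, Set.mem_range_self x, hselfAtom _ x⟩
  · rintro W ⟨x, rfl⟩ V ⟨y, rfl⟩ hne'
    rw [Set.disjoint_iff_inter_eq_empty]
    by_contra hcon
    have hnon : (Wf x ∩ Wf y).Nonempty := Set.nonempty_iff_ne_empty.mpr hcon
    rcases le_total (N x) (N y) with h | h
    · exact hne' (hkey x y h hnon)
    · exact hne' ((hkey y x h (Set.inter_comm _ _ ▸ hnon)).symm)
  · rintro W ⟨x, rfl⟩
    refine ⟨U x, hU𝒰 x, ?_⟩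
    intro w hw
    exact (memAtom.mp hw).1
  · rintro W ⟨x, rfl⟩
    obtain ⟨z, hz, hzgood⟩ := hNgood x
    refine ⟨z, hz, ?_, ?_⟩
    · have hlb : m z - ε / 2 ≤ sInf (m '' Wf x) := by
        apply le_csInf ⟨m z, Set.mem_image_of_mem m hz⟩
        rintro r ⟨w, hw, rfl⟩
        exact (hzgood w hw).1.le
      linarith
    · have hub : sSup (M '' Wf x) ≤ M z + ε / 2 := by
        apply csSup_le ⟨M z, Set.mem_image_of_mem M hz⟩
        rintro r ⟨w, hw, rfl⟩
        exact (hzgood w hw).2.le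
      linarith
end

section
/- Let Y be a Fraïssé fence and ⪯ a strongly compatible order on Y. Then both the set of points of Y which are ⪯-maximal but not ⪯-minimal, and the set of points of Y which are simultaneously ⪯-minimal and ⪯-maximal (equivalently, the points whose connected component is a singleton), are dense in Y. -/
/-! The Fraïssé property applied to two copies of a small neighbourhood `V` of `x` yields an arc
component with both endpoints in `V`. A closed total order on an arc has its least and greatest
elements at the endpoints, since removing the greatest element leaves a connected set (a directed
union of down-sets), and by compactness order intervals between points near `x` stay near `x`.
Hence every open set contains a whole arc component; its top element is maximal but not minimal.
For each `n`, the points lying in a clopen set inside a ball of radius `1 / (n + 1)` form a dense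
open set (take a clopen neighbourhood of such a small component), and a point in all of them
(Baire) has a singleton component. -/

open Set

/-- A subset of a topological space is an arc if it is homeomorphic to the unit interval. -/
def IsArc {Y : Type*} [TopologicalSpace Y] (A : Set Y) : Prop :=
  Nonempty (A ≃ₜ unitInterval)

/-- A fence is a compact metrizable space whose connected components are singletons or arcs. -/
def IsFence (Y : Type*) [TopologicalSpace Y] : Prop :=
  CompactSpace Y ∧ TopologicalSpace.MetrizableSpace Y ∧
    ∀ x : Y, connectedComponent x = {x} ∨ IsArc (connectedComponent x)

/-- A closed partial order on a topological space. -/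
def IsClosedPartialOrder {Y : Type*} [TopologicalSpace Y] (r : Y → Y → Prop) : Prop :=
  IsClosed {p : Y × Y | r p.1 p.2} ∧ Reflexive r ∧ AntiSymmetric r ∧ Transitive r

/-- A closed partial order whose restriction to each connected component is a total order. -/
def IsCompatibleOrder {Y : Type*} [TopologicalSpace Y] (r : Y → Y → Prop) : Prop :=
  IsClosedPartialOrder r ∧
    ∀ x : Y, ∀ y ∈ connectedComponent x, ∀ z ∈ connectedComponent x, r y z ∨ r z y

/-- A smooth fence is a fence admitting a closed partial order whose restriction to each
connected component is a total order. -/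
def IsSmoothFence (Y : Type*) [TopologicalSpace Y] : Prop :=
  IsFence Y ∧ ∃ r : Y → Y → Prop, IsCompatibleOrder r

/-- A strongly compatible order: a compatible closed partial order such that any two
comparable points lie in the same connected component. -/
def IsStronglyCompatibleOrder {Y : Type*} [TopologicalSpace Y] (r : Y → Y → Prop) : Prop :=
  IsCompatibleOrder r ∧ ∀ x y : Y, r x y → y ∈ connectedComponent x

/-- `x` is one of the two endpoints of the arc `A`. -/
def IsEndpointOfArc {Y : Type*} [TopologicalSpace Y] (A : Set Y) (x : Y) : Prop :=
  ∃ (h : A ≃ₜ unitInterval) (hx : x ∈ A), h ⟨x, hx⟩ = 0 ∨ h ⟨x, hx⟩ = 1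

/-- A point is an endpoint of the space if, whenever it belongs to an arc, it is one of
its two endpoints. -/
def IsEndpoint {Y : Type*} [TopologicalSpace Y] (x : Y) : Prop :=
  ∀ A : Set Y, IsArc A → x ∈ A → IsEndpointOfArc A x

/-- A Fraïssé fence: a nonempty smooth fence such that for any two open sets meeting a
common connected component there is an arc component with one endpoint in each. -/
def IsFraisseFence (Y : Type*) [TopologicalSpace Y] : Prop :=
  Nonempty Y ∧ IsSmoothFence Y ∧
    ∀ O O' : Set Y, IsOpen O → IsOpen O' →
      (∃ z : Y, (O ∩ connectedComponent z).Nonempty ∧ (O' ∩ connectedComponent z).Nonempty) →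
      ∃ w : Y, IsArc (connectedComponent w) ∧
        ∃ a b : Y, a ≠ b ∧ a ∈ O ∧ b ∈ O' ∧
          IsEndpointOfArc (connectedComponent w) a ∧ IsEndpointOfArc (connectedComponent w) b

section ClosedOrder

variable {X : Type*} [TopologicalSpace X] {r : X → X → Prop}

lemma IsClosedPartialOrder.isClosed_setOf_rel_left (hr : IsClosedPartialOrder r) (c : X) :
    IsClosed {t | r c t} :=
  hr.1.preimage (continuous_const.prodMk continuous_id)

lemma IsClosedPartialOrder.isClosed_setOf_rel_right (hr : IsClosedPartialOrder r) (c : X) :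
    IsClosed {t | r t c} :=
  hr.1.preimage (continuous_id.prodMk continuous_const)

lemma IsClosedPartialOrder.flip (hr : IsClosedPartialOrder r) : IsClosedPartialOrder (flip r) :=
  ⟨hr.1.preimage continuous_swap, hr.2.1, fun _ _ h₁ h₂ => hr.2.2.1 h₂ h₁,
    fun _ _ _ h₁ h₂ => hr.2.2.2 h₂ h₁⟩

lemma IsClosedPartialOrder.restrict (hr : IsClosedPartialOrder r) (s : Set X) :
    IsClosedPartialOrder (fun a b : s => r a b) :=
  ⟨hr.1.preimage (continuous_subtype_val.prodMap continuous_subtype_val), fun a => hr.2.1 a,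
    fun _ _ h₁ h₂ => Subtype.ext (hr.2.2.1 h₁ h₂), fun _ _ _ h₁ h₂ => hr.2.2.2 h₁ h₂⟩

lemma IsClosedPartialOrder.exists_forall_rel [CompactSpace X] [Nonempty X]
    (hr : IsClosedPartialOrder r) (htotal : ∀ a b, r a b ∨ r b a) : ∃ M, ∀ c, r c M := by
  have hdir : Directed (· ⊇ ·) fun c => {t | r c t} := fun c d =>
    (htotal c d).elim (fun h => ⟨d, fun _ ht => hr.2.2.2 h ht, le_rfl⟩)
      (fun h => ⟨c, le_rfl, fun _ ht => hr.2.2.2 h ht⟩)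
  obtain ⟨M, hM⟩ := IsCompact.nonempty_iInter_of_directed_nonempty_isCompact_isClosed _ hdir
    (fun c => ⟨c, hr.2.1 c⟩) (fun c => (hr.isClosed_setOf_rel_left c).isCompact)
    hr.isClosed_setOf_rel_left
  exact ⟨M, mem_iInter.mp hM⟩

lemma IsClosedPartialOrder.isPreconnected_setOf_rel [PreconnectedSpace X]
    (hr : IsClosedPartialOrder r) (htotal : ∀ a b, r a b ∨ r b a) (c : X) :
    IsPreconnected {t | r t c} := by
  -- `F ∩ Iic c` and `(G ∩ Iic c) ∪ Ici c` are closed and cover the connected space `X`.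
  have key : ∀ F G : Set X, IsClosed F → IsClosed G → {t | r t c} ⊆ F ∪ G →
      ({t | r t c} ∩ F).Nonempty → c ∈ G → ({t | r t c} ∩ (F ∩ G)).Nonempty := by
    intro F G hF hG hcov ⟨s, hs⟩ hcG
    have hcover : univ ⊆ ({t | r t c} ∩ F) ∪ (({t | r t c} ∩ G) ∪ {t | r c t}) := fun t _ =>
      (htotal t c).elim (fun htc => (hcov htc).elim (fun htF => Or.inl ⟨htc, htF⟩)
        fun htG => Or.inr (Or.inl ⟨htc, htG⟩)) fun hct => Or.inr (Or.inr hct)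
    obtain ⟨t, -, ⟨htc, htF⟩, htG | hct⟩ := isPreconnected_closed_iff.mp isPreconnected_univ _ _
      ((hr.isClosed_setOf_rel_right c).inter hF)
      (((hr.isClosed_setOf_rel_right c).inter hG).union (hr.isClosed_setOf_rel_left c))
      hcover ⟨s, trivial, hs⟩ ⟨c, trivial, Or.inr (hr.2.1 c)⟩
    · exact ⟨t, htc, htF, htG.2⟩
    · obtain rfl := hr.2.2.1 htc hct
      exact ⟨t, htc, htF, hcG⟩
  refine isPreconnected_closed_iff.mpr fun F G hF hG hcov hF' hG' => ?_
  rcases hcov (hr.2.1 c) with hcF | hcG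
  · obtain ⟨t, htc, htG, htF⟩ := key G F hG hF (union_comm F G ▸ hcov) hG' hcF
    exact ⟨t, htc, htF, htG⟩
  · exact key F G hF hG hcov hF' hcG

lemma IsClosedPartialOrder.isPreconnected_compl_singleton_of_forall_rel [PreconnectedSpace X]
    (hr : IsClosedPartialOrder r) (htotal : ∀ a b, r a b ∨ r b a) {M : X} (hM : ∀ t, r t M) :
    IsPreconnected ({M}ᶜ : Set X) := by
  have hunion : ({M}ᶜ : Set X) = ⋃₀ ((fun c => {t | r t c}) '' {M}ᶜ) := by
    ext t
    simp only [mem_compl_iff, mem_singleton_iff, sUnion_image, mem_iUnion, mem_ofPred_eq,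
      exists_prop]
    refine ⟨fun ht => ⟨t, ht, hr.2.1 t⟩, ?_⟩
    rintro ⟨c, hc, htc⟩ rfl
    exact hc (hr.2.2.1 (hM c) htc)
  rw [hunion]
  refine IsPreconnected.sUnion_directed ?_ ?_
  · rintro _ ⟨c, hc, rfl⟩ _ ⟨d, hd, rfl⟩
    rcases htotal c d with h | h
    · exact ⟨_, ⟨d, hd, rfl⟩, fun _ ht => hr.2.2.2 ht h, le_rfl⟩
    · exact ⟨_, ⟨c, hc, rfl⟩, le_rfl, fun _ ht => hr.2.2.2 ht h⟩
  · rintro _ ⟨c, -, rfl⟩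
    exact hr.isPreconnected_setOf_rel htotal c

lemma IsClosedPartialOrder.exists_isOpen_forall_rel_mem [CompactSpace X]
    (hr : IsClosedPartialOrder r) {x : X} {U : Set X} (hU : IsOpen U) (hx : x ∈ U) :
    ∃ V, IsOpen V ∧ x ∈ V ∧ ∀ a ∈ V, ∀ b ∈ V, ∀ y, r a y → r y b → y ∈ U := by
  -- The pairs `(a, b)` whose order interval leaves `U` are the projection of a closed subset of
  -- `(X × X) × X`, hence closed as `X` is compact.
  let T := {q : (X × X) × X | r q.1.1 q.2 ∧ r q.2 q.1.2 ∧ q.2 ∈ Uᶜ}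
  have hT : IsClosed T :=
    (hr.1.preimage (f := fun q : (X × X) × X => (q.1.1, q.2)) (by fun_prop)).inter
      ((hr.1.preimage (f := fun q : (X × X) × X => (q.2, q.1.2)) (by fun_prop)).inter
        (hU.isClosed_compl.preimage continuous_snd))
  have hxx : (x, x) ∉ Prod.fst '' T := by
    rintro ⟨⟨⟨a, b⟩, y⟩, ⟨hay, hyb, hy⟩, he⟩
    obtain ⟨rfl, rfl⟩ := Prod.mk.inj he
    exact hy (hr.2.2.1 hyb hay ▸ hx)
  obtain ⟨u, v, hu, hv, hxu, hxv, huv⟩ :=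
    isOpen_prod_iff.mp (isClosedMap_fst_of_compactSpace _ hT).isOpen_compl x x hxx
  refine ⟨u ∩ v, hu.inter hv, ⟨hxu, hxv⟩, fun a ha b hb y hay hyb => ?_⟩
  by_contra hy
  exact huv ⟨ha.1, hb.2⟩ ⟨((a, b), y), ⟨hay, hyb, hy⟩, rfl⟩

end ClosedOrder

lemma unitInterval.eq_zero_or_eq_one_of_isPreconnected_compl_singleton {M : unitInterval}
    (h : IsPreconnected ({M}ᶜ : Set unitInterval)) : M = 0 ∨ M = 1 := by
  rw [isPreconnected_iff_ordConnected] at h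
  by_contra! hM
  exact h.out (Ne.symm hM.1) (Ne.symm hM.2) ⟨unitInterval.nonneg', unitInterval.le_one'⟩ rfl

lemma Homeomorph.apply_eq_zero_or_eq_one_of_forall_rel {X : Type*} [TopologicalSpace X]
    {r : X → X → Prop} (h : X ≃ₜ unitInterval) (hr : IsClosedPartialOrder r)
    (htotal : ∀ a b, r a b ∨ r b a) {M : X} (hM : ∀ t, r t M) : h M = 0 ∨ h M = 1 := by
  have : PreconnectedSpace X := h.symm.surjective.denseRange.preconnectedSpace h.symm.continuous
  have hpre := (hr.isPreconnected_compl_singleton_of_forall_rel htotal hM).image h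
    h.continuous.continuousOn
  rw [image_compl_eq h.bijective, image_singleton] at hpre
  exact unitInterval.eq_zero_or_eq_one_of_isPreconnected_compl_singleton hpre

lemma IsEndpointOfArc.eq_or_eq {Y : Type*} [TopologicalSpace Y] {r : Y → Y → Prop} {C : Set Y}
    {a m M : Y} (ha : IsEndpointOfArc C a) (hr : IsClosedPartialOrder r)
    (htotal : ∀ y ∈ C, ∀ z ∈ C, r y z ∨ r z y) (hmC : m ∈ C) (hMC : M ∈ C)
    (hm : ∀ c ∈ C, r m c) (hM : ∀ c ∈ C, r c M) (hmM : m ≠ M) : a = m ∨ a = M := by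
  obtain ⟨h, haC, ha⟩ := ha
  have htotal' : ∀ p q : C, r p q ∨ r q p := fun p q => htotal p p.2 q q.2
  have hm01 := h.apply_eq_zero_or_eq_one_of_forall_rel (hr.restrict C).flip
    (fun p q => htotal' q p) (M := ⟨m, hmC⟩) fun t => hm t t.2
  have hM01 := h.apply_eq_zero_or_eq_one_of_forall_rel (hr.restrict C) htotal'
    (M := ⟨M, hMC⟩) fun t => hM t t.2
  have hval : ∀ p q : C, h p = h q → (p : Y) = q := fun p q e =>
    congrArg Subtype.val (h.injective e)
  rcases ha with ha | ha <;> rcases hm01 with hm' | hm' <;> rcases hM01 with hM' | hM'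
  all_goals first
    | exact absurd (hval _ _ (hm'.trans hM'.symm)) hmM
    | exact Or.inl (hval _ _ (ha.trans hm'.symm))
    | exact Or.inr (hval _ _ (ha.trans hM'.symm))

lemma exists_isClopen_mem_subset_of_connectedComponent_subset {X : Type*} [TopologicalSpace X]
    [T2Space X] [CompactSpace X] {x : X} {U : Set X} (hU : IsOpen U)
    (hxU : connectedComponent x ⊆ U) : ∃ K, IsClopen K ∧ x ∈ K ∧ K ⊆ U := by
  have : Nonempty {s : Set X // IsClopen s ∧ x ∈ s} := ⟨⟨univ, isClopen_univ, trivial⟩⟩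
  have hdir : Directed (· ⊇ ·) fun s : {s : Set X // IsClopen s ∧ x ∈ s} => (s : Set X) :=
    fun s t => ⟨⟨s ∩ t, s.2.1.inter t.2.1, s.2.2, t.2.2⟩, inter_subset_left, inter_subset_right⟩
  obtain ⟨⟨K, hK, hxK⟩, hKU⟩ := exists_subset_nhds_of_compactSpace hdir
    (fun s => s.2.1.isClosed) fun y hy => hU.mem_nhds (hxU (by
      rwa [connectedComponent_eq_iInter_isClopen]))
  exact ⟨K, hK, hxK, hKU⟩

lemma dense_setOf_connectedComponent_eq_singleton {X : Type*} [TopologicalSpace X]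
    [CompactSpace X] [TopologicalSpace.MetrizableSpace X]
    (h : ∀ U : Set X, IsOpen U → U.Nonempty → ∃ x, connectedComponent x ⊆ U) :
    Dense {x : X | connectedComponent x = {x}} := by
  let := TopologicalSpace.metrizableSpaceMetric X
  let D : ℕ → Set X := fun n =>
    {z | ∃ K c, IsClopen K ∧ z ∈ K ∧ K ⊆ Metric.ball c (1 / (n + 1))}
  have hDopen : ∀ n, IsOpen (D n) := fun n => isOpen_iff_forall_mem_open.mpr
    fun _ ⟨K, c, hK, hzK, hKc⟩ => ⟨K, fun _ hy => ⟨K, c, hK, hy, hKc⟩, hK.isOpen, hzK⟩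
  have hDdense : ∀ n, Dense (D n) := by
    refine fun n => dense_iff_inter_open.mpr fun O hO ⟨p, hp⟩ => ?_
    have hOp : IsOpen (O ∩ Metric.ball p (1 / (n + 1))) := hO.inter Metric.isOpen_ball
    obtain ⟨x, hx⟩ := h _ hOp ⟨p, hp, Metric.mem_ball_self (by positivity)⟩
    obtain ⟨K, hK, hxK, hKO⟩ := exists_isClopen_mem_subset_of_connectedComponent_subset hOp hx
    exact ⟨x, (hKO hxK).1, K, p, hK, hxK, fun _ hy => (hKO hy).2⟩
  refine (dense_iInter_of_isOpen_nat hDopen hDdense).mono fun z hz => ?_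
  refine eq_singleton_iff_unique_mem.mpr ⟨mem_connectedComponent, fun y hy => ?_⟩
  refine eq_of_forall_dist_le fun ε hε => ?_
  obtain ⟨n, hn⟩ := exists_nat_one_div_lt (half_pos hε)
  obtain ⟨K, c, hK, hzK, hKc⟩ := mem_iInter.mp hz n
  have hyc := Metric.mem_ball.mp (hKc (hK.connectedComponent_subset hzK hy))
  have hzc := Metric.mem_ball'.mp (hKc hzK)
  linarith [dist_triangle y c z]

section Fence

variable {Y : Type*} [TopologicalSpace Y] {r : Y → Y → Prop}

lemma IsCompatibleOrder.flip (hr : IsCompatibleOrder r) : IsCompatibleOrder (flip r) :=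
  ⟨hr.1.flip, fun x y hy z hz => hr.2 x z hz y hy⟩

lemma IsCompatibleOrder.exists_forall_rel_connectedComponent [CompactSpace Y]
    (hr : IsCompatibleOrder r) (w : Y) :
    ∃ M ∈ connectedComponent w, ∀ c ∈ connectedComponent w, r c M := by
  have : CompactSpace (connectedComponent w) :=
    isCompact_iff_compactSpace.mp isClosed_connectedComponent.isCompact
  have : Nonempty (connectedComponent w) := ⟨⟨w, mem_connectedComponent⟩⟩
  obtain ⟨M, hM⟩ := (hr.1.restrict _).exists_forall_rel fun p q => hr.2 w p p.2 q q.2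
  exact ⟨M, M.2, fun c hc => hM ⟨c, hc⟩⟩

lemma IsFraisseFence.compactSpace (hY : IsFraisseFence Y) : CompactSpace Y :=
  hY.2.1.1.1

lemma IsFraisseFence.metrizableSpace (hY : IsFraisseFence Y) :
    TopologicalSpace.MetrizableSpace Y :=
  hY.2.1.1.2.1

lemma IsFraisseFence.exists_connectedComponent_subset (hY : IsFraisseFence Y)
    (hr : IsCompatibleOrder r) {U : Set Y} (hU : IsOpen U) {x : Y} (hx : x ∈ U) :
    ∃ w, connectedComponent w ⊆ U ∧ (connectedComponent w).Nontrivial := by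
  have := hY.compactSpace
  obtain ⟨V, hV, hxV, hVU⟩ := hr.1.exists_isOpen_forall_rel_mem hU hx
  obtain ⟨w, -, a, b, hab, haV, hbV, ha, hb⟩ := hY.2.2 V V hV hV
    ⟨x, ⟨x, hxV, mem_connectedComponent⟩, ⟨x, hxV, mem_connectedComponent⟩⟩
  obtain ⟨M, hMC, hM⟩ := hr.exists_forall_rel_connectedComponent w
  obtain ⟨m, hmC, hm⟩ := hr.flip.exists_forall_rel_connectedComponent w
  obtain ⟨-, haC, -⟩ := id ha
  obtain ⟨-, hbC, -⟩ := id hb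
  have hmM : m ≠ M := by
    rintro rfl
    exact hab ((hr.1.2.2.1 (hM a haC) (hm a haC)).trans (hr.1.2.2.1 (hM b hbC) (hm b hbC)).symm)
  have hmMV : m ∈ V ∧ M ∈ V := by
    rcases ha.eq_or_eq hr.1 (hr.2 w) hmC hMC hm hM hmM with rfl | rfl <;>
      rcases hb.eq_or_eq hr.1 (hr.2 w) hmC hMC hm hM hmM with rfl | rfl
    exacts [absurd rfl hab, ⟨haV, hbV⟩, ⟨hbV, haV⟩, absurd rfl hab]
  exact ⟨w, fun c hc => hVU m hmMV.1 M hmMV.2 c (hm c hc) (hM c hc), a, haC, b, hbC, hab⟩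

end Fence

/-- In the Fraïssé fence, both the set of points which are maximal but not minimal and the
set of points which are simultaneously minimal and maximal are dense. -/
theorem stmt_18 (Y : Type*) [TopologicalSpace Y] (hY : IsFraisseFence Y)
    (r : Y → Y → Prop) (hr : IsStronglyCompatibleOrder r) :
    Dense {x : Y | (∀ y, r x y → y = x) ∧ ¬ (∀ y, r y x → y = x)} ∧
    Dense {x : Y | (∀ y, r y x → y = x) ∧ (∀ y, r x y → y = x)} := by
  obtain ⟨hcompat, hsame⟩ := hr
  have := hY.compactSpace
  have := hY.metrizableSpace
  have hsame' : ∀ {x y}, r x y → x ∈ connectedComponent y := fun h =>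
    connectedComponent_eq (hsame _ _ h) ▸ mem_connectedComponent
  constructor
  · refine dense_iff_inter_open.mpr fun U hU ⟨x, hx⟩ => ?_
    obtain ⟨w, hwU, hw⟩ := hY.exists_connectedComponent_subset hcompat hU hx
    obtain ⟨M, hMC, hM⟩ := hcompat.exists_forall_rel_connectedComponent w
    obtain ⟨m, hmC, hmM⟩ := hw.exists_ne M
    have hMw := connectedComponent_eq hMC
    refine ⟨M, hwU hMC, fun y hMy => hcompat.1.2.2.1 (hM y (hMw ▸ hsame _ _ hMy)) hMy,
      fun hmin => hmM (hmin m (hM m hmC))⟩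
  · refine (dense_setOf_connectedComponent_eq_singleton fun U hU ⟨x, hx⟩ => ?_).mono
      fun z (hz : connectedComponent z = {z}) =>
        ⟨fun y hyz => mem_singleton_iff.mp (hz ▸ hsame' hyz),
          fun y hzy => mem_singleton_iff.mp (hz ▸ hsame _ _ hzy)⟩
    obtain ⟨w, hwU, -⟩ := hY.exists_connectedComponent_subset hcompat hU hx
    exact ⟨w, hwU⟩
end
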